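/- arXiv:1507.02949 — 13 statements merged into one kernel-verified Lean document; each statement's English description precedes it below -/
import Mathlib

section
/- Let κ > 0 be a real number and let λ be a real number with -(κ+1)/2 ≤ λ ≤ 0. Then for every integer j ≥ 0 one has (2λ)^{2j}/((2j)!·Γ(1+2j+κ)) + (2λ)^{2j+1}/((2j+1)!·Γ(2+2j+κ)) ≥ 0, and moreover this quantity is strictly positive for every j ≥ 1 whenever -(κ+1)/2 ≤ λ < 0. -/
lemma pair_eq (κ : ℝ) (hκ : 0 < κ) (lam : ℝ) (j : ℕ) :
    (2 * lam) ^ (2 * j) / ((Nat.factorial (2 * j) : ℝ) * Real.Gamma (1 + 2 * j + κ))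
      + (2 * lam) ^ (2 * j + 1) / ((Nat.factorial (2 * j + 1) : ℝ) * Real.Gamma (2 + 2 * j + κ))
    = (2 * lam) ^ (2 * j) * ((2 * j + 1) * (1 + 2 * j + κ) + 2 * lam)
        / ((Nat.factorial (2 * j + 1) : ℝ) * Real.Gamma (2 + 2 * j + κ)) := by
  have hx : (0:ℝ) < 1 + 2 * j + κ := by positivity
  have hG : Real.Gamma (2 + 2 * j + κ) = (1 + 2 * j + κ) * Real.Gamma (1 + 2 * j + κ) := by
    have h : (2:ℝ) + 2 * j + κ = (1 + 2 * j + κ) + 1 := by ring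
    rw [h, Real.Gamma_add_one (ne_of_gt hx)]
  have hGpos : 0 < Real.Gamma (1 + 2 * j + κ) := Real.Gamma_pos_of_pos hx
  have hF : (Nat.factorial (2 * j + 1) : ℝ) = (2 * j + 1) * (Nat.factorial (2 * j) : ℝ) := by
    rw [Nat.factorial_succ]; push_cast; ring
  have hF0 : (Nat.factorial (2 * j) : ℝ) ≠ 0 := by positivity
  rw [hG, hF]
  field_simp
  ring

theorem stmt_0 (κ : ℝ) (hκ : 0 < κ) (lam : ℝ)
    (hlam₁ : -(κ + 1) / 2 ≤ lam) (hlam₂ : lam ≤ 0) :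
    (∀ j : ℕ,
      0 ≤ (2 * lam) ^ (2 * j) / ((Nat.factorial (2 * j) : ℝ) * Real.Gamma (1 + 2 * j + κ))
          + (2 * lam) ^ (2 * j + 1) / ((Nat.factorial (2 * j + 1) : ℝ) * Real.Gamma (2 + 2 * j + κ))) ∧
    (lam < 0 → ∀ j : ℕ, 1 ≤ j →
      0 < (2 * lam) ^ (2 * j) / ((Nat.factorial (2 * j) : ℝ) * Real.Gamma (1 + 2 * j + κ))
          + (2 * lam) ^ (2 * j + 1) / ((Nat.factorial (2 * j + 1) : ℝ) * Real.Gamma (2 + 2 * j + κ))) := by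
  have hDpos : ∀ j : ℕ, (0:ℝ) < (Nat.factorial (2 * j + 1) : ℝ) * Real.Gamma (2 + 2 * j + κ) := by
    intro j
    have hx : (0:ℝ) < 2 + 2 * j + κ := by positivity
    have := Real.Gamma_pos_of_pos hx
    positivity
  constructor
  · intro j
    rw [pair_eq κ hκ lam j]
    have hA : (0:ℝ) ≤ (2 * lam) ^ (2 * j) := (even_two_mul j).pow_nonneg _
    have hB : (0:ℝ) ≤ (2 * j + 1) * (1 + 2 * j + κ) + 2 * lam := by
      have hj : (0:ℝ) ≤ (j:ℝ) := Nat.cast_nonneg j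
      nlinarith
    exact div_nonneg (mul_nonneg hA hB) (le_of_lt (hDpos j))
  · intro hlam j hj
    rw [pair_eq κ hκ lam j]
    have hjr : (1:ℝ) ≤ (j:ℝ) := by exact_mod_cast hj
    have hA : (0:ℝ) < (2 * lam) ^ (2 * j) := by
      have h2 : (2 * lam) ≠ 0 := by nlinarith
      exact (even_two_mul j).pow_pos h2
    have hB : (0:ℝ) < (2 * j + 1) * (1 + 2 * j + κ) + 2 * lam := by nlinarith
    exact div_pos (mul_pos hA hB) (hDpos j)
end

section
/- Let κ > 0 be a real number and let λ be a real number with -(κ+1)/2 ≤ λ ≤ 0. Then Σ_{j=0}^∞ (2λ)^j/(j!·Γ(1+j+κ)) > 0. -/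
open Real

lemma gamma_fac_le (κ : ℝ) (hκ : 0 < κ) : ∀ n : ℕ,
    (Nat.factorial n : ℝ) * Real.Gamma (1 + κ) ≤ Real.Gamma (1 + n + κ) := by
  intro n
  induction n with
  | zero => simp
  | succ n ih =>
    have h1 : (1 : ℝ) + (n + 1 : ℕ) + κ = (1 + n + κ) + 1 := by push_cast; ring
    have hpos : (0:ℝ) < 1 + n + κ := by positivity
    rw [h1, Real.Gamma_add_one (ne_of_gt hpos)]
    have hfac : (Nat.factorial (n+1) : ℝ) = (n+1) * Nat.factorial n := by
      push_cast [Nat.factorial_succ]; ring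
    rw [hfac]
    calc (n+1 : ℝ) * Nat.factorial n * Real.Gamma (1 + κ)
        ≤ (1 + n + κ) * (Nat.factorial n * Real.Gamma (1 + κ)) := by
          have h0 : (0:ℝ) ≤ (Nat.factorial n : ℝ) * Real.Gamma (1 + κ) := by
            have := Real.Gamma_pos_of_pos (show (0:ℝ) < 1 + κ by linarith)
            positivity
          nlinarith [h0, hκ]
      _ ≤ (1 + n + κ) * Real.Gamma (1 + n + κ) := by
          exact mul_le_mul_of_nonneg_left ih (le_of_lt hpos)

lemma summable_f (κ : ℝ) (hκ : 0 < κ) (x : ℝ) :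
    Summable (fun j : ℕ => x ^ j / ((Nat.factorial j : ℝ) * Real.Gamma (1 + j + κ))) := by
  apply Summable.of_norm
  have hG : 0 < Real.Gamma (1 + κ) := Real.Gamma_pos_of_pos (by linarith)
  refine Summable.of_nonneg_of_le (fun j => norm_nonneg _) (g := fun j =>
    ‖x ^ j / ((Nat.factorial j : ℝ) * Real.Gamma (1 + j + κ))‖) ?_
    ((Real.summable_pow_div_factorial |x|).mul_right (1 / Real.Gamma (1 + κ)))
  intro j
  have hGj : 0 < Real.Gamma (1 + j + κ) := Real.Gamma_pos_of_pos (by positivity)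
  have hfacpos : (0:ℝ) < (Nat.factorial j : ℝ) := by exact_mod_cast Nat.factorial_pos j
  show ‖x ^ j / ((Nat.factorial j : ℝ) * Real.Gamma (1 + j + κ))‖ ≤ _
  rw [norm_div, norm_pow, Real.norm_eq_abs, Real.norm_eq_abs]
  rw [abs_of_pos (by positivity : (0:ℝ) < (Nat.factorial j : ℝ) * Real.Gamma (1 + j + κ))]
  rw [div_le_iff₀ (by positivity)]
  have hb := gamma_fac_le κ hκ j
  have heq : |x| ^ j / (Nat.factorial j : ℝ) * (1 / Real.Gamma (1 + κ)) *
      ((Nat.factorial j : ℝ) * Real.Gamma (1 + j + κ))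
      = |x| ^ j * (Real.Gamma (1 + j + κ) / Real.Gamma (1 + κ)) := by
    field_simp
  rw [heq]
  have h1 : (1:ℝ) ≤ Real.Gamma (1 + j + κ) / Real.Gamma (1 + κ) := by
    rw [le_div_iff₀ hG]
    have hfac1 : (1:ℝ) ≤ (Nat.factorial j : ℝ) := by
      exact_mod_cast Nat.one_le_iff_ne_zero.mpr (Nat.factorial_ne_zero j)
    nlinarith [hb]
  nlinarith [pow_nonneg (abs_nonneg x) j]

theorem stmt_1 (κ : ℝ) (hκ : 0 < κ) (lam : ℝ)
    (hlam₁ : -(κ + 1) / 2 ≤ lam) (hlam₂ : lam ≤ 0) :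
    0 < ∑' j : ℕ, (2 * lam) ^ j / ((Nat.factorial j : ℝ) * Real.Gamma (1 + j + κ)) := by
  set x := 2 * lam with hx
  set f : ℕ → ℝ := fun j => x ^ j / ((Nat.factorial j : ℝ) * Real.Gamma (1 + j + κ)) with hf
  have hsum : Summable f := summable_f κ hκ x
  have hxlow : -(κ + 1) ≤ x := by rw [hx]; linarith
  have hxle : x ≤ 0 := by rw [hx]; linarith
  have heven : Summable (fun k : ℕ => f (2 * k)) :=
    hsum.comp_injective (fun a b h => by omega)
  have hodd : Summable (fun k : ℕ => f (2 * k + 1)) :=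
    hsum.comp_injective (fun a b h => by omega)
  rw [show (∑' j : ℕ, (2 * lam) ^ j / ((Nat.factorial j : ℝ) * Real.Gamma (1 + j + κ)))
      = ∑' j, f j from rfl, ← tsum_even_add_odd heven hodd, ← Summable.tsum_add heven hodd]
  -- key algebraic identity for each pair
  have key : ∀ k : ℕ, f (2 * k) + f (2 * k + 1)
      = x ^ (2 * k) * (((2*k+1 : ℝ)) * (1 + 2*k + κ) + x)
        / (((2*k+1 : ℝ)) * (1 + 2*k + κ) * ((Nat.factorial (2*k) : ℝ)
            * Real.Gamma (1 + 2*k + κ))) := by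
    intro k
    have hGn : 0 < Real.Gamma (1 + (2*k : ℕ) + κ) := Real.Gamma_pos_of_pos (by positivity)
    have hfacpos : (0:ℝ) < (Nat.factorial (2*k) : ℝ) := by exact_mod_cast Nat.factorial_pos _
    have h1 : (1 : ℝ) + (2*k + 1 : ℕ) + κ = (1 + (2*k:ℕ) + κ) + 1 := by push_cast; ring
    have hfac : (Nat.factorial (2*k+1) : ℝ) = (2*k+1 : ℕ) * Nat.factorial (2*k) := by
      push_cast [Nat.factorial_succ]; ring
    simp only [hf]
    rw [h1, Real.Gamma_add_one (by positivity), hfac]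
    have hc : (0:ℝ) < 1 + (2*k:ℕ) + κ := by positivity
    push_cast
    rw [pow_succ]
    field_simp
  have hpos1 : (0:ℝ) < 1 + κ := by linarith
  have hGκ : 0 < Real.Gamma (1 + κ) := Real.Gamma_pos_of_pos hpos1
  have hnonneg : ∀ k : ℕ, 0 ≤ f (2 * k) + f (2 * k + 1) := by
    intro k
    rw [key k]
    have hGn : 0 < Real.Gamma (1 + (2*k:ℕ) + κ) := Real.Gamma_pos_of_pos (by positivity)
    have hGn' : 0 < Real.Gamma (1 + 2*(k:ℝ) + κ) := by
      have : (1 : ℝ) + 2*(k:ℝ) + κ = 1 + (2*k : ℕ) + κ := by push_cast; ring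
      rw [this]; exact hGn
    have hfacpos : (0:ℝ) < (Nat.factorial (2*k) : ℝ) := by exact_mod_cast Nat.factorial_pos _
    apply div_nonneg
    · apply mul_nonneg
      · rw [show 2*k = k + k from by ring, pow_add]
        exact mul_self_nonneg _
      · have hk0 : (0:ℝ) ≤ (k:ℝ) := Nat.cast_nonneg k
        nlinarith [sq_nonneg (k:ℝ), hk0, hxlow]
    · have hk0 : (0:ℝ) ≤ (k:ℝ) := Nat.cast_nonneg k
      have h1 : (0:ℝ) < 2*(k:ℝ)+1 := by linarith
      have h2 : (0:ℝ) < 1+2*(k:ℝ)+κ := by linarith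
      exact le_of_lt (mul_pos (mul_pos h1 h2) (mul_pos hfacpos hGn'))
  rcases eq_or_lt_of_le hxle with hx0 | hxneg
  · -- x = 0 : use k = 0
    apply Summable.tsum_pos (heven.add hodd) hnonneg 0
    rw [key 0]
    apply div_pos
    · apply mul_pos
      · norm_num
      · nlinarith
    · have hG0 : 0 < Real.Gamma (1 + 2*((0:ℕ):ℝ) + κ) := by
        have h : (1:ℝ) + 2*((0:ℕ):ℝ) + κ = 1 + κ := by push_cast; ring
        rw [h]; exact hGκ
      have hfp0 : (0:ℝ) < (Nat.factorial (2*0) : ℝ) := by norm_num [Nat.factorial]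
      refine mul_pos (mul_pos (by positivity) (by positivity)) (mul_pos hfp0 hG0)
  · -- x < 0 : use k = 1
    apply Summable.tsum_pos (heven.add hodd) hnonneg 1
    rw [key 1]
    have hG3 : 0 < Real.Gamma (1 + 2*(1:ℝ) + κ) := Real.Gamma_pos_of_pos (by linarith)
    apply div_pos
    · apply mul_pos
      · rw [show 2*1 = 2 from rfl, sq]
        exact mul_pos_of_neg_of_neg hxneg hxneg
      · push_cast; nlinarith
    · have hG1 : 0 < Real.Gamma (1 + 2*((1:ℕ):ℝ) + κ) := Real.Gamma_pos_of_pos (by push_cast; linarith)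
      have hfp : (0:ℝ) < (Nat.factorial (2*1) : ℝ) := by norm_num [Nat.factorial]
      refine mul_pos (mul_pos (by positivity) (by positivity)) (mul_pos hfp hG1)
end

section
/- Let κ > 0 be a real number. Then log(Σ_{j=0}^∞ (2λ)^j/(j!·Γ(1+j+κ))) / (2·√(2λ)) tends to 1 as λ → +∞; equivalently, log of this series is asymptotically equivalent to 2√(2λ) as λ → +∞. -/
/-!
Writing `x = t²`, the upper bound comes from `j! Γ(1+j+κ) ≥ Γ(1+κ) (j!)²` and
`(2j)! ≤ 4ʲ (j!)²`, which dominate the series termwise by `cosh (2t) / Γ(1+κ) ≤ e^{2t} / Γ(1+κ)`.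
For the lower bound keep the single term `j = ⌊t⌋`: its denominator is at most `((j+m)!)²` with
`m ≥ κ`, and Stirling's upper bound for `(j+m)!` shows that this term is `e^{2t}` up to a factor
polynomial in `t`. Both bounds are `2t + O(log t)`.
-/

open Real Filter Topology
open scoped Nat

/-- The `j`-th term of `∑ xʲ / (j! Γ(1+j+κ)) = x^{-κ/2} I_κ(2√x)`. -/
noncomputable def besselTerm (κ x : ℝ) (j : ℕ) : ℝ := x ^ j / (j ! * Gamma (1 + j + κ))

lemma Nat.factorial_two_mul_le_four_pow_mul_sq (n : ℕ) : (2 * n)! ≤ 4 ^ n * n ! ^ 2 := by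
  have h := Nat.choose_mul_factorial_mul_factorial (by omega : n ≤ 2 * n)
  rw [show 2 * n - n = n by omega] at h
  calc (2 * n)! = (2 * n).choose n * n ! ^ 2 := by rw [← h, sq, mul_assoc]
    _ ≤ 4 ^ n * n ! ^ 2 := by
      gcongr
      exact Nat.centralBinom_eq_two_mul_choose n ▸ Nat.centralBinom_le_four_pow n

lemma Real.log_factorial_le_stirling {n : ℕ} (hn : n ≠ 0) :
    log n ! ≤ n * log n - n + log n / 2 + 1 := by
  have hseq : Stirling.stirlingSeq n ≤ exp 1 / √2 := by
    obtain ⟨k, rfl⟩ := Nat.exists_eq_succ_of_ne_zero hn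
    rw [← Stirling.stirlingSeq_one]
    exact Stirling.stirlingSeq'_antitone (Nat.zero_le k)
  have hfac : (n ! : ℝ) ≤ exp 1 * √n * (n / exp 1) ^ n := by
    rw [Stirling.stirlingSeq, div_le_iff₀ (by positivity), sqrt_mul zero_le_two] at hseq
    refine hseq.trans_eq ?_
    field_simp
  calc log n ! ≤ log (exp 1 * √n * (n / exp 1) ^ n) := log_le_log (by positivity) hfac
    _ = _ := by
      rw [log_mul (by positivity) (by positivity), log_mul (by positivity) (by positivity),
        log_exp, log_sqrt (by positivity), log_pow, log_div (by positivity) (by positivity),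
        log_exp]
      ring

lemma Real.Gamma_one_add_mul_factorial_le {κ : ℝ} (hκ : 0 ≤ κ) (j : ℕ) :
    Gamma (1 + κ) * j ! ≤ Gamma (1 + j + κ) := by
  induction j with
  | zero => simp
  | succ j ih =>
    have hj : 0 < 1 + j + κ := by positivity
    rw [Nat.factorial_succ, Nat.cast_mul, Nat.cast_succ,
      show 1 + ((j : ℝ) + 1) + κ = (1 + j + κ) + 1 by ring, Gamma_add_one hj.ne']
    calc Gamma (1 + κ) * ((j + 1) * j !) = (j + 1) * (Gamma (1 + κ) * j !) := by ring
      _ ≤ (1 + j + κ) * Gamma (1 + j + κ) := mul_le_mul (by linarith) ih (by positivity) hj.le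

lemma Real.Gamma_le_factorial {s : ℝ} {n : ℕ} (hs : 2 ≤ s) (hsn : s ≤ n + 1) : Gamma s ≤ n ! := by
  rw [← Gamma_nat_eq_factorial]
  exact Gamma_strictMonoOn_Ici.monotoneOn hs (hs.trans hsn) hsn

section besselTerm

variable {κ : ℝ}

lemma besselTerm_nonneg (hκ : 0 ≤ κ) {x : ℝ} (hx : 0 ≤ x) (j : ℕ) : 0 ≤ besselTerm κ x j := by
  unfold besselTerm
  positivity

lemma besselTerm_pos (hκ : 0 ≤ κ) {x : ℝ} (hx : 0 < x) (j : ℕ) : 0 < besselTerm κ x j := by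
  unfold besselTerm
  positivity

lemma besselTerm_sq_le (hκ : 0 ≤ κ) (t : ℝ) (j : ℕ) :
    besselTerm κ (t ^ 2) j ≤ (2 * t) ^ (2 * j) / (2 * j)! / Gamma (1 + κ) := by
  have hden : Gamma (1 + κ) * j ! ^ 2 ≤ j ! * Gamma (1 + j + κ) := by
    calc Gamma (1 + κ) * j ! ^ 2 = j ! * (Gamma (1 + κ) * j !) := by ring
      _ ≤ j ! * Gamma (1 + j + κ) := by gcongr; exact Gamma_one_add_mul_factorial_le hκ j
  have hfac : ((2 * j)! : ℝ) ≤ 4 ^ j * j ! ^ 2 := by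
    exact_mod_cast Nat.factorial_two_mul_le_four_pow_mul_sq j
  calc besselTerm κ (t ^ 2) j ≤ (t ^ 2) ^ j / (Gamma (1 + κ) * j ! ^ 2) := by
        unfold besselTerm
        gcongr
    _ = 4 ^ j * (t ^ 2) ^ j / (4 ^ j * j ! ^ 2) / Gamma (1 + κ) := by field_simp
    _ ≤ 4 ^ j * (t ^ 2) ^ j / (2 * j)! / Gamma (1 + κ) := by gcongr
    _ = (2 * t) ^ (2 * j) / (2 * j)! / Gamma (1 + κ) := by
        rw [pow_mul, mul_pow, ← mul_pow]
        norm_num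

lemma summable_besselTerm_sq (hκ : 0 ≤ κ) (t : ℝ) : Summable (besselTerm κ (t ^ 2)) :=
  .of_nonneg_of_le (besselTerm_nonneg hκ (sq_nonneg t)) (besselTerm_sq_le hκ t)
    ((hasSum_cosh (2 * t)).summable.div_const _)

lemma tsum_besselTerm_sq_pos (hκ : 0 ≤ κ) (t : ℝ) : 0 < ∑' j, besselTerm κ (t ^ 2) j := by
  refine lt_of_lt_of_le ?_
    ((summable_besselTerm_sq hκ t).le_tsum 0 fun j _ ↦ besselTerm_nonneg hκ (sq_nonneg t) j)
  simp only [besselTerm, pow_zero, Nat.factorial_zero, Nat.cast_one, Nat.cast_zero, add_zero,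
    one_mul]
  positivity

lemma log_tsum_besselTerm_sq_le (hκ : 0 ≤ κ) {t : ℝ} (ht : 0 ≤ t) :
    log (∑' j, besselTerm κ (t ^ 2) j) ≤ 2 * t - log (Gamma (1 + κ)) := by
  have hΓ := Gamma_pos_of_pos (by linarith : 0 < 1 + κ)
  have hcosh : cosh (2 * t) ≤ exp (2 * t) := by
    rw [cosh_eq]
    linarith [exp_le_exp.2 (by linarith : -(2 * t) ≤ 2 * t)]
  have hsum : ∑' j, besselTerm κ (t ^ 2) j ≤ exp (2 * t) / Gamma (1 + κ) :=
    (hasSum_le (besselTerm_sq_le hκ t) (summable_besselTerm_sq hκ t).hasSum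
      ((hasSum_cosh _).div_const _)).trans (by gcongr)
  calc log (∑' j, besselTerm κ (t ^ 2) j) ≤ log (exp (2 * t) / Gamma (1 + κ)) :=
        log_le_log (tsum_besselTerm_sq_pos hκ t) hsum
    _ = 2 * t - log (Gamma (1 + κ)) := by rw [log_div (exp_ne_zero _) hΓ.ne', log_exp]

lemma log_besselTerm_sq_ge (hκ : 0 ≤ κ) {m : ℕ} (hκm : κ ≤ m) {t : ℝ} (ht : 0 < t) {j : ℕ}
    (hj : 1 ≤ j) : 2 * j * log t - 2 * log (j + m)! ≤ log (besselTerm κ (t ^ 2) j) := by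
  have hden : (j ! : ℝ) * Gamma (1 + j + κ) ≤ (j + m)! ^ 2 := by
    rw [sq]
    gcongr
    · omega
    · have : (1 : ℝ) ≤ j := by exact_mod_cast hj
      exact Gamma_le_factorial (by linarith) (by push_cast; linarith)
  calc 2 * j * log t - 2 * log (j + m)! = log ((t ^ 2) ^ j / (j + m)! ^ 2) := by
        rw [log_div (by positivity) (by positivity), log_pow, log_pow, log_pow]
        push_cast
        ring
    _ ≤ log (besselTerm κ (t ^ 2) j) :=
        log_le_log (by positivity) (div_le_div_of_nonneg_left (by positivity) (by positivity) hden)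

lemma log_tsum_besselTerm_sq_ge (hκ : 0 ≤ κ) {m : ℕ} (hκm : κ ≤ m) {t : ℝ} (ht : 1 ≤ t) :
    2 * t - (2 * m + 1) * log (t + m) - 4 ≤ log (∑' j, besselTerm κ (t ^ 2) j) := by
  set j := ⌊t⌋₊
  have hj : 1 ≤ j := Nat.le_floor (by exact_mod_cast ht)
  have hjt : (j : ℝ) ≤ t := Nat.floor_le (by linarith)
  have htj : t - 1 ≤ j := by linarith [Nat.lt_floor_add_one t]
  have hn : ((j + m : ℕ) : ℝ) = j + m := Nat.cast_add j m
  have hn0 : (0 : ℝ) < j + m := by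
    have : (1 : ℝ) ≤ j := by exact_mod_cast hj
    positivity
  have hstirling := log_factorial_le_stirling (n := j + m) (by omega)
  have hlog_le : log (j + m) ≤ log (t + m) := log_le_log hn0 (by linarith)
  -- `log (n / t) ≤ n / t - 1` with `n = j + m ≤ t + m`
  have hratio : j * (log (j + m) - log t) ≤ m := by
    have h := log_le_sub_one_of_pos (div_pos hn0 (by linarith : 0 < t))
    rw [log_div hn0.ne' (by linarith)] at h
    calc j * (log (j + m) - log t) ≤ j * ((j + m) / t - 1) := by gcongr
      _ ≤ m := by
        rw [mul_sub, mul_one, ← mul_div_assoc, sub_le_iff_le_add, div_le_iff₀ (by linarith)]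
        nlinarith
  calc 2 * t - (2 * m + 1) * log (t + m) - 4 ≤ 2 * j * log t - 2 * log (j + m)! := by
        rw [hn] at hstirling
        nlinarith
    _ ≤ log (besselTerm κ (t ^ 2) j) := log_besselTerm_sq_ge hκ hκm (by linarith) hj
    _ ≤ log (∑' j, besselTerm κ (t ^ 2) j) :=
        log_le_log (besselTerm_pos hκ (by positivity) j)
          ((summable_besselTerm_sq hκ t).le_tsum j fun i _ ↦
            besselTerm_nonneg hκ (sq_nonneg t) i)

end besselTerm

lemma tendsto_two_mul_sub_mul_log_add_div (a b c : ℝ) :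
    Tendsto (fun t ↦ (2 * t - a * log (t + b) - c) / (2 * t)) atTop (𝓝 1) := by
  have hlog : Tendsto (fun t ↦ log (t + b) / t) atTop (𝓝 0) := by
    have hshift : (fun t : ℝ ↦ t + b) =O[atTop] id :=
      (Asymptotics.isBigO_refl id atTop).add (Asymptotics.isLittleO_const_id_atTop b).isBigO
    exact ((isLittleO_log_id_atTop.comp_tendsto
      (tendsto_atTop_add_const_right atTop b tendsto_id)).trans_isBigO hshift).tendsto_div_nhds_zero
  have h := (tendsto_const_nhds (x := (1 : ℝ))).sub (hlog.const_mul (a / 2)) |>.sub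
    (tendsto_inv_atTop_zero.const_mul (c / 2))
  simp only [mul_zero, sub_zero] at h
  refine h.congr' ?_
  filter_upwards [eventually_gt_atTop 0] with t ht
  field_simp

theorem tendsto_log_tsum_besselTerm_sq_div {κ : ℝ} (hκ : 0 ≤ κ) :
    Tendsto (fun t ↦ log (∑' j, besselTerm κ (t ^ 2) j) / (2 * t)) atTop (𝓝 1) := by
  obtain ⟨m, hm⟩ := exists_nat_ge κ
  refine tendsto_of_tendsto_of_tendsto_of_le_of_le'
    (tendsto_two_mul_sub_mul_log_add_div (2 * m + 1) m 4)
    (tendsto_two_mul_sub_mul_log_add_div 0 0 (log (Gamma (1 + κ)))) ?_ ?_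
  · filter_upwards [eventually_ge_atTop 1] with t ht
    exact div_le_div_of_nonneg_right (log_tsum_besselTerm_sq_ge hκ hm ht) (by linarith)
  · filter_upwards [eventually_gt_atTop 0] with t ht
    gcongr
    simpa using log_tsum_besselTerm_sq_le hκ ht.le

theorem stmt_2 (κ : ℝ) (hκ : 0 < κ) :
    Filter.Tendsto
      (fun lam : ℝ =>
        Real.log (∑' j : ℕ, (2 * lam) ^ j / ((Nat.factorial j : ℝ) * Real.Gamma (1 + j + κ)))
          / (2 * Real.sqrt (2 * lam)))
      Filter.atTop (nhds 1) := by
  have hsqrt : Tendsto (fun lam : ℝ ↦ √(2 * lam)) atTop atTop :=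
    tendsto_sqrt_atTop.comp (tendsto_id.const_mul_atTop two_pos)
  refine ((tendsto_log_tsum_besselTerm_sq_div hκ.le).comp hsqrt).congr' ?_
  filter_upwards [eventually_ge_atTop 0] with lam hlam
  simp only [Function.comp_apply, besselTerm, sq_sqrt (by linarith : (0 : ℝ) ≤ 2 * lam)]
end

section
/- Let α > 0, p > 0 and λ ≥ 0 be real numbers. Then the series Σ_{k=0}^∞ log(1 + (λ/p)·e^{-αk}) converges and satisfies (1/α)·∫₀^{λ/p} log(1+u)/u du ≤ Σ_{k=0}^∞ log(1 + (λ/p)·e^{-αk}) ≤ (1/α)·∫₀^{λ/p} log(1+u)/u du + log(1 + λ/p). -/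
/-!
For `c = λ / p > 0` the function `g x = log (1 + c e^{-αx})` is nonnegative and decreasing on
`[0, ∞)`, so the integral test sandwiches `∑ g k` between `∫₀^∞ g` and `g 0 + ∫₀^∞ g`, with
`g 0 = log (1 + c)`. The substitution `u = c e^{-αx}`, `du = -α u dx`, gives
`∫₀^∞ g = (1/α) ∫₀^c log (1 + u) / u du`.
-/

open Real MeasureTheory Filter Set Topology

lemma log_one_add_div_self_nonneg {u : ℝ} (hu : 0 ≤ u) : 0 ≤ log (1 + u) / u :=
  div_nonneg (log_nonneg (by linarith)) hu

lemma log_one_add_div_self_le_one {u : ℝ} (hu : 0 < u) : log (1 + u) / u ≤ 1 := by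
  rw [div_le_one hu]
  linarith [log_le_sub_one_of_pos (x := 1 + u) (by linarith)]

lemma intervalIntegrable_log_one_add_div_self {t : ℝ} (ht : 0 ≤ t) :
    IntervalIntegrable (fun u => log (1 + u) / u) volume 0 t := by
  rw [intervalIntegrable_iff_integrableOn_Ioc_of_le ht]
  refine (integrableOn_const measure_Ioc_lt_top.ne (C := (1 : ℝ))).mono'
    (Measurable.aestronglyMeasurable (by fun_prop)) ?_
  filter_upwards [ae_restrict_mem measurableSet_Ioc] with u hu
  rw [norm_of_nonneg (log_one_add_div_self_nonneg hu.1.le)]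
  exact log_one_add_div_self_le_one hu.1

lemma integral_log_one_add_div_self_nonneg {t : ℝ} (ht : 0 ≤ t) :
    0 ≤ ∫ u in (0 : ℝ)..t, log (1 + u) / u :=
  intervalIntegral.integral_nonneg ht fun _ hu => log_one_add_div_self_nonneg hu.1

lemma integral_log_one_add_div_self_le {t : ℝ} (ht : 0 ≤ t) :
    ∫ u in (0 : ℝ)..t, log (1 + u) / u ≤ t := by
  have := intervalIntegral.integral_mono_on ht (intervalIntegrable_log_one_add_div_self ht)
    (intervalIntegrable_const (c := (1 : ℝ))) fun u hu => by
      rcases hu.1.eq_or_lt with rfl | hu0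
      · simp
      · exact log_one_add_div_self_le_one hu0
  simpa using this

lemma tendsto_integral_log_one_add_div_self_nhdsGE_zero :
    Tendsto (fun t => ∫ u in (0 : ℝ)..t, log (1 + u) / u) (𝓝[≥] 0) (𝓝 0) :=
  tendsto_of_tendsto_of_tendsto_of_le_of_le' tendsto_const_nhds
    (tendsto_nhdsWithin_of_tendsto_nhds tendsto_id)
    (eventually_nhdsWithin_of_forall fun _ ht => integral_log_one_add_div_self_nonneg ht)
    (eventually_nhdsWithin_of_forall fun _ ht => integral_log_one_add_div_self_le ht)

lemma hasDerivAt_integral_log_one_add_div_self {t : ℝ} (ht : 0 < t) :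
    HasDerivAt (fun t => ∫ u in (0 : ℝ)..t, log (1 + u) / u) (log (1 + t) / t) t :=
  intervalIntegral.integral_hasDerivAt_right (intervalIntegrable_log_one_add_div_self ht.le)
    (Measurable.stronglyMeasurable (by fun_prop)).stronglyMeasurableAtFilter
    (ContinuousAt.div (by fun_prop (disch := linarith)) continuousAt_id ht.ne')

section LogOneAddMulExp

variable {α c : ℝ}

lemma log_one_add_mul_exp_nonneg (hc : 0 ≤ c) (x : ℝ) : 0 ≤ log (1 + c * exp (-α * x)) :=
  log_nonneg (by have := exp_pos (-α * x); nlinarith)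

lemma antitone_log_one_add_mul_exp (hα : 0 ≤ α) (hc : 0 ≤ c) :
    Antitone fun x => log (1 + c * exp (-α * x)) := by
  intro x y hxy
  have hexp : exp (-α * y) ≤ exp (-α * x) := exp_le_exp.2 (by nlinarith)
  exact log_le_log (by have := exp_pos (-α * y); nlinarith) (by nlinarith)

lemma hasDerivAt_integral_log_one_add_div_self_mul_exp (hα : α ≠ 0) (hc : 0 < c) (x : ℝ) :
    HasDerivAt (fun x => -(1 / α) * ∫ u in (0 : ℝ)..c * exp (-α * x), log (1 + u) / u)
      (log (1 + c * exp (-α * x))) x := by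
  have hu : 0 < c * exp (-α * x) := mul_pos hc (exp_pos _)
  have hinner : HasDerivAt (fun x => c * exp (-α * x)) (c * exp (-α * x) * -α) x := by
    simpa [mul_assoc] using (((hasDerivAt_id x).const_mul (-α)).exp).const_mul c
  refine (((hasDerivAt_integral_log_one_add_div_self hu).comp x hinner).const_mul
    (-(1 / α))).congr_deriv ?_
  field_simp

lemma tendsto_integral_log_one_add_div_self_mul_exp (hα : 0 < α) (hc : 0 ≤ c) :
    Tendsto (fun x => -(1 / α) * ∫ u in (0 : ℝ)..c * exp (-α * x), log (1 + u) / u)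
      atTop (𝓝 0) := by
  have hexp : Tendsto (fun x => c * exp (-α * x)) atTop (𝓝[≥] 0) := by
    refine tendsto_nhdsWithin_iff.2 ⟨?_, Eventually.of_forall fun x => ?_⟩
    · simpa using ((tendsto_exp_comp_nhds_zero.2
        (tendsto_id.const_mul_atTop_of_neg (neg_neg_of_pos hα))).const_mul c)
    · exact mul_nonneg hc (exp_pos _).le
  simpa using (tendsto_integral_log_one_add_div_self_nhdsGE_zero.comp hexp).const_mul (-(1 / α))

lemma integrableOn_Ioi_log_one_add_mul_exp (hα : 0 < α) (hc : 0 < c) :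
    IntegrableOn (fun x => log (1 + c * exp (-α * x))) (Ioi 0) :=
  integrableOn_Ioi_deriv_of_nonneg'
    (fun x _ => hasDerivAt_integral_log_one_add_div_self_mul_exp hα.ne' hc x)
    (fun x _ => log_one_add_mul_exp_nonneg hc.le x)
    (tendsto_integral_log_one_add_div_self_mul_exp hα hc.le)

lemma integral_Ioi_log_one_add_mul_exp (hα : 0 < α) (hc : 0 < c) :
    ∫ x in Ioi 0, log (1 + c * exp (-α * x)) = 1 / α * ∫ u in (0 : ℝ)..c, log (1 + u) / u := by
  rw [integral_Ioi_of_hasDerivAt_of_nonneg'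
    (fun x _ => hasDerivAt_integral_log_one_add_div_self_mul_exp hα.ne' hc x)
    (fun x _ => log_one_add_mul_exp_nonneg hc.le x)
    (tendsto_integral_log_one_add_div_self_mul_exp hα hc.le)]
  simp

end LogOneAddMulExp

theorem stmt_4 (α p lam : ℝ) (hα : 0 < α) (hp : 0 < p) (hlam : 0 ≤ lam) :
    Summable (fun k : ℕ => Real.log (1 + lam / p * Real.exp (-α * k))) ∧
    (1 / α) * (∫ u in (0:ℝ)..(lam / p), Real.log (1 + u) / u)
      ≤ ∑' k : ℕ, Real.log (1 + lam / p * Real.exp (-α * k)) ∧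
    ∑' k : ℕ, Real.log (1 + lam / p * Real.exp (-α * k))
      ≤ (1 / α) * (∫ u in (0:ℝ)..(lam / p), Real.log (1 + u) / u) + Real.log (1 + lam / p) := by
  obtain hc | hc := (div_nonneg hlam hp.le).eq_or_lt
  -- the substitution needs `c > 0`: the integrand takes the junk value `0` at `u = 0`
  · simp [← hc]
  set g : ℝ → ℝ := fun x => log (1 + lam / p * exp (-α * x))
  have anti : AntitoneOn g (Ici 0) := (antitone_log_one_add_mul_exp hα.le hc.le).antitoneOn _
  have nonneg : ∀ x ∈ Ioi (0 : ℝ), 0 ≤ g x := fun x _ => log_one_add_mul_exp_nonneg hc.le x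
  have integrable : IntegrableOn g (Ioi 0) := integrableOn_Ioi_log_one_add_mul_exp hα hc
  have summable := anti.summable_of_integrableOn_Ioi_zero integrable nonneg
  rw [← integral_Ioi_log_one_add_mul_exp hα hc]
  refine ⟨summable, anti.integral_le_tsum summable nonneg, ?_⟩
  simpa [g, add_comm] using anti.tsum_le_integral integrable nonneg
end

section
/- Let α > 0 and p > 0 be real numbers. Then lim_{λ → +∞} (Σ_{k=0}^∞ log(1 + (λ/p)·e^{-αk})) / ((log λ)²/(2α)) = 1; in particular the limit does not depend on p. -/
open Real Filter Finset

lemma exp_pow (α : ℝ) (k : ℕ) : Real.exp (-α * k) = (Real.exp (-α))^k := by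
  rw [mul_comm, Real.exp_nat_mul]

lemma summ (α x : ℝ) (hα : 0 < α) (hx : 0 ≤ x) :
    Summable (fun k : ℕ => Real.log (1 + x * Real.exp (-α * k))) := by
  have hgeo : Summable (fun k : ℕ => x * (Real.exp (-α))^k) :=
    (summable_geometric_of_lt_one (Real.exp_nonneg _)
      (Real.exp_lt_one_iff.2 (by linarith))).mul_left x
  refine Summable.of_nonneg_of_le (fun k => Real.log_nonneg ?_) (fun k => ?_) hgeo
  · nlinarith [Real.exp_pos (-α * k), mul_nonneg hx (Real.exp_pos (-α*k)).le]
  · rw [← exp_pow]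
    have h1 : 0 < 1 + x * Real.exp (-α * k) := by
      nlinarith [mul_nonneg hx (Real.exp_pos (-α*k)).le]
    have := Real.log_le_sub_one_of_pos h1
    linarith

lemma gauss (N : ℕ) : (∑ k ∈ Finset.range (N+1), (k:ℝ)) = N*(N+1)/2 := by
  have h := Finset.sum_range_id_mul_two (N+1)
  have : ((∑ i ∈ Finset.range (N+1), i : ℕ) : ℝ) * 2 = (N+1)*N := by
    exact_mod_cast congrArg (Nat.cast : ℕ → ℝ) h
  push_cast at this ⊢
  linarith

lemma lower (α x : ℝ) (hα : 0 < α) (hx : 1 ≤ x) :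
    (Real.log x)^2/(2*α) ≤ ∑' k : ℕ, Real.log (1 + x * Real.exp (-α * k)) := by
  have hx0 : 0 < x := by linarith
  set L := Real.log x with hLdef
  have hL : 0 ≤ L := Real.log_nonneg hx
  set N := ⌊L/α⌋₊ with hNdef
  have hN1 : (N:ℝ) ≤ L/α := Nat.floor_le (by positivity)
  have hN2 : L/α < N + 1 := Nat.lt_floor_add_one _
  have key : ∀ k ∈ Finset.range (N+1), (L - α*k) ≤ Real.log (1 + x * Real.exp (-α*k)) := by
    intro k hk
    have hk' : (k:ℝ) ≤ N := by exact_mod_cast Nat.lt_succ_iff.1 (Finset.mem_range.1 hk)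
    have hak : α * k ≤ L := by
      have := hk'.trans hN1
      calc α * k ≤ α * (L/α) := by nlinarith
        _ = L := by field_simp
    have hpos : 0 < x * Real.exp (-α*k) := by positivity
    calc L - α*k = Real.log (x * Real.exp (-α*k)) := by
          rw [Real.log_mul (ne_of_gt hx0) (Real.exp_ne_zero _), Real.log_exp]; ring
      _ ≤ Real.log (1 + x * Real.exp (-α*k)) :=
          Real.log_le_log (by positivity) (by linarith)
  have hsum := summ α x hα hx0.le
  have step1 : ∑ k ∈ Finset.range (N+1), (L - α*(k:ℝ)) ≤
      ∑' k : ℕ, Real.log (1 + x * Real.exp (-α * k)) := by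
    calc ∑ k ∈ Finset.range (N+1), (L - α*(k:ℝ))
        ≤ ∑ k ∈ Finset.range (N+1), Real.log (1 + x * Real.exp (-α*k)) :=
          Finset.sum_le_sum key
      _ ≤ ∑' k : ℕ, Real.log (1 + x * Real.exp (-α * k)) := by
          refine Summable.sum_le_tsum _ (fun k _ => Real.log_nonneg ?_) hsum
          nlinarith [mul_nonneg hx0.le (Real.exp_pos (-α*k)).le]
  have hev : ∑ k ∈ Finset.range (N+1), (L - α*(k:ℝ)) = (N+1)*L - α*(N*(N+1)/2) := by
    rw [Finset.sum_sub_distrib, Finset.sum_const, Finset.card_range, ← Finset.mul_sum, gauss]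
    push_cast; ring
  rw [hev] at step1
  have goal : L^2/(2*α) ≤ (N+1)*L - α*(N*(N+1)/2) := by
    have h1 : α * N ≤ L := by
      calc α * N ≤ α * (L/α) := by nlinarith
        _ = L := by field_simp
    have h2 : L < α * (N+1) := by
      have := (div_lt_iff₀ hα).1 hN2
      linarith
    rw [div_le_iff₀ (by positivity)]
    nlinarith [mul_nonneg (sub_nonneg.2 h1) (sub_nonneg.2 h2.le), (Nat.cast_nonneg N : (0:ℝ) ≤ N)]
  linarith

lemma upper (α x : ℝ) (hα : 0 < α) (hx : 1 ≤ x) :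
    ∑' k : ℕ, Real.log (1 + x * Real.exp (-α * k)) ≤
      (Real.log x + α)^2/(2*α) + (Real.log x/α + 1)*Real.log 2 + 1/(1 - Real.exp (-α)) := by
  have hx0 : 0 < x := by linarith
  set L := Real.log x with hLdef
  have hL : 0 ≤ L := Real.log_nonneg hx
  set N := ⌊L/α⌋₊ with hNdef
  have hN1 : (N:ℝ) ≤ L/α := Nat.floor_le (by positivity)
  have hN2 : L/α < N + 1 := Nat.lt_floor_add_one _
  have h1 : α * N ≤ L := by
    calc α * N ≤ α * (L/α) := by nlinarith
      _ = L := by field_simp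
  have h2 : L < α * (N+1) := by
    have := (div_lt_iff₀ hα).1 hN2; linarith
  have hsum := summ α x hα hx0.le
  have hsplit := Summable.sum_add_tsum_nat_add (N+1) hsum
  -- head bound
  have head : ∑ k ∈ Finset.range (N+1), Real.log (1 + x * Real.exp (-α*k)) ≤
      (N+1)*(Real.log 2) + ((N+1)*L - α*(N*(N+1)/2)) := by
    have key : ∀ k ∈ Finset.range (N+1),
        Real.log (1 + x * Real.exp (-α*k)) ≤ Real.log 2 + (L - α*k) := by
      intro k hk
      have hk' : (k:ℝ) ≤ N := by exact_mod_cast Nat.lt_succ_iff.1 (Finset.mem_range.1 hk)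
      have hak : α * k ≤ L := by nlinarith
      have hpos : 0 < x * Real.exp (-α*k) := by positivity
      have hone : 1 ≤ x * Real.exp (-α*k) := by
        have : Real.exp (α*k) ≤ x := by
          rw [← Real.exp_log hx0]
          exact Real.exp_le_exp.2 hak
        calc (1:ℝ) = Real.exp (α*k) * Real.exp (-α*k) := by
              rw [← Real.exp_add]; simp
          _ ≤ x * Real.exp (-α*k) := by
              exact mul_le_mul_of_nonneg_right this (Real.exp_pos _).le
      calc Real.log (1 + x * Real.exp (-α*k)) ≤ Real.log (2 * (x * Real.exp (-α*k))) :=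
            Real.log_le_log (by linarith) (by linarith)
        _ = Real.log 2 + (L - α*k) := by
            rw [Real.log_mul (by norm_num) (ne_of_gt hpos),
              Real.log_mul (ne_of_gt hx0) (Real.exp_ne_zero _), Real.log_exp]
            ring
    calc ∑ k ∈ Finset.range (N+1), Real.log (1 + x * Real.exp (-α*k))
        ≤ ∑ k ∈ Finset.range (N+1), (Real.log 2 + (L - α*(k:ℝ))) := Finset.sum_le_sum key
      _ = (N+1)*(Real.log 2) + ((N+1)*L - α*(N*(N+1)/2)) := by
          rw [Finset.sum_add_distrib, Finset.sum_const, Finset.card_range,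
            Finset.sum_sub_distrib, Finset.sum_const, Finset.card_range,
            ← Finset.mul_sum, gauss]
          push_cast; ring
  -- tail bound
  have tail : ∑' k : ℕ, Real.log (1 + x * Real.exp (-α*(k + (N+1) : ℕ))) ≤
      1/(1 - Real.exp (-α)) := by
    have hr : Real.exp (-α) < 1 := Real.exp_lt_one_iff.2 (by linarith)
    have hr0 : (0:ℝ) ≤ Real.exp (-α) := (Real.exp_pos _).le
    have hgeo : Summable (fun k : ℕ => x * Real.exp (-α*((N+1):ℕ)) * (Real.exp (-α))^k) :=
      (summable_geometric_of_lt_one hr0 hr).mul_left _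
    have hsum' : Summable (fun k : ℕ => Real.log (1 + x * Real.exp (-α*(k + (N+1) : ℕ)))) := by
      exact_mod_cast (summable_nat_add_iff (N+1)).2 (summ α x hα hx0.le)
    have step : ∑' k : ℕ, Real.log (1 + x * Real.exp (-α*(k + (N+1) : ℕ))) ≤
        ∑' k : ℕ, x * Real.exp (-α*((N+1):ℕ)) * (Real.exp (-α))^k := by
      refine Summable.tsum_le_tsum (fun k => ?_) hsum' hgeo
      have hpos : 0 < 1 + x * Real.exp (-α*(k + (N+1):ℕ)) := by positivity
      have := Real.log_le_sub_one_of_pos hpos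
      have heq : x * Real.exp (-α*(k + (N+1):ℕ)) =
          x * Real.exp (-α*((N+1):ℕ)) * (Real.exp (-α))^k := by
        rw [mul_assoc, ← exp_pow, ← Real.exp_add]
        congr 1; push_cast; ring
      calc Real.log (1 + x * Real.exp (-α*(k + (N+1):ℕ)))
          ≤ x * Real.exp (-α*(k + (N+1):ℕ)) := by linarith
        _ = x * Real.exp (-α*((N+1):ℕ)) * (Real.exp (-α))^k := heq
    have hxsmall : x * Real.exp (-α*((N+1):ℕ)) ≤ 1 := by
      have hh : Real.exp (Real.log x + -α*((N+1):ℕ)) ≤ Real.exp 0 := by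
        apply Real.exp_le_exp.2; push_cast; linarith
      rw [← Real.exp_log hx0, ← Real.exp_add]
      simpa using hh
    have hgeosum : ∑' k : ℕ, x * Real.exp (-α*((N+1):ℕ)) * (Real.exp (-α))^k =
        x * Real.exp (-α*((N+1):ℕ)) * (1 - Real.exp (-α))⁻¹ := by
      rw [tsum_mul_left, tsum_geometric_of_lt_one hr0 hr]
    rw [hgeosum] at step
    have hinv : (0:ℝ) < (1 - Real.exp (-α))⁻¹ := by
      apply inv_pos.2; linarith
    calc ∑' k : ℕ, Real.log (1 + x * Real.exp (-α*(k + (N+1) : ℕ)))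
        ≤ x * Real.exp (-α*((N+1):ℕ)) * (1 - Real.exp (-α))⁻¹ := step
      _ ≤ 1 * (1 - Real.exp (-α))⁻¹ := mul_le_mul_of_nonneg_right hxsmall hinv.le
      _ = 1/(1 - Real.exp (-α)) := by rw [one_mul, one_div]
  -- combine
  have harith : (N+1)*(Real.log 2) + ((N+1)*L - α*(N*(N+1)/2)) ≤
      (L + α)^2/(2*α) + (L/α + 1)*Real.log 2 := by
    have hlog2 : (0:ℝ) ≤ Real.log 2 := Real.log_nonneg (by norm_num)
    have hNle : (N:ℝ) + 1 ≤ L/α + 1 := by linarith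
    have hterm1 : ((N:ℝ)+1)*(Real.log 2) ≤ (L/α + 1)*Real.log 2 :=
      mul_le_mul_of_nonneg_right hNle hlog2
    have hterm2 : ((N:ℝ)+1)*L - α*(N*(N+1)/2) ≤ (L + α)^2/(2*α) := by
      rw [le_div_iff₀ (by positivity)]
      nlinarith [sq_nonneg (L - α*N - α/2), (Nat.cast_nonneg N : (0:ℝ) ≤ N)]
    linarith
  rw [← hsplit]
  push_cast at tail ⊢
  linarith

lemma quad (a b : ℝ) : Tendsto (fun t : ℝ => (t^2 + a*t + b)/t^2) atTop (nhds 1) := by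
  have h : Tendsto (fun t : ℝ => t⁻¹) atTop (nhds 0) := tendsto_inv_atTop_zero
  have h2 : Tendsto (fun t : ℝ => 1 + a * t⁻¹ + b * t⁻¹^2) atTop (nhds (1 + a*0 + b*0^2)) :=
    (tendsto_const_nhds.add (h.const_mul a)).add ((h.pow 2).const_mul b)
  norm_num at h2
  refine h2.congr' ?_
  filter_upwards [eventually_gt_atTop (0:ℝ)] with t ht
  field_simp

theorem stmt_6 (α p : ℝ) (hα : 0 < α) (hp : 0 < p) :
    Filter.Tendsto
      (fun lam : ℝ =>
        (∑' k : ℕ, Real.log (1 + lam / p * Real.exp (-α * k))) / ((Real.log lam) ^ 2 / (2 * α)))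
      Filter.atTop (nhds 1) := by
  set c := Real.log p with hc
  set C := 1/(1 - Real.exp (-α)) with hC
  -- lower ratio tendsto
  have hlowT : Tendsto (fun t : ℝ => ((t - c)^2/(2*α)) / (t^2/(2*α))) atTop (nhds 1) := by
    refine (quad (-2*c) (c^2)).congr' ?_
    filter_upwards [eventually_gt_atTop (0:ℝ)] with t ht
    field_simp
    ring
  have hupT : Tendsto (fun t : ℝ =>
      ((t - c + α)^2/(2*α) + ((t - c)/α + 1)*Real.log 2 + C) / (t^2/(2*α))) atTop (nhds 1) := by
    refine (quad (2*(α-c)+2*Real.log 2)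
      ((α-c)^2 - 2*c*Real.log 2 + 2*α*Real.log 2 + 2*α*C)).congr' ?_
    filter_upwards [eventually_gt_atTop (0:ℝ)] with t ht
    field_simp
    ring
  have hlow : Tendsto (fun lam : ℝ => ((Real.log lam - c)^2/(2*α)) / ((Real.log lam)^2/(2*α)))
      atTop (nhds 1) := hlowT.comp Real.tendsto_log_atTop
  have hup : Tendsto (fun lam : ℝ =>
      ((Real.log lam - c + α)^2/(2*α) + ((Real.log lam - c)/α + 1)*Real.log 2 + C)
        / ((Real.log lam)^2/(2*α))) atTop (nhds 1) := hupT.comp Real.tendsto_log_atTop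
  refine tendsto_of_tendsto_of_tendsto_of_le_of_le' hlow hup ?_ ?_
  · filter_upwards [eventually_gt_atTop (0:ℝ), eventually_gt_atTop (1:ℝ),
      Real.tendsto_log_atTop.eventually_ge_atTop (c + α)] with lam h0 h1 hlog
    have hlx : Real.log (lam/p) = Real.log lam - c := Real.log_div (ne_of_gt h0) (ne_of_gt hp)
    have hxpos : 0 < lam/p := by positivity
    have hx1 : 1 ≤ lam/p := by
      calc (1:ℝ) = Real.exp 0 := Real.exp_zero.symm
        _ ≤ Real.exp (Real.log (lam/p)) := Real.exp_le_exp.2 (by rw [hlx]; linarith)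
        _ = lam/p := Real.exp_log hxpos
    have hq : 0 < (Real.log lam)^2/(2*α) := by
      have : 0 < Real.log lam := Real.log_pos h1
      positivity
    have := lower α (lam/p) hα hx1
    rw [hlx] at this
    exact div_le_div_of_nonneg_right this hq.le
  · filter_upwards [eventually_gt_atTop (0:ℝ), eventually_gt_atTop (1:ℝ),
      Real.tendsto_log_atTop.eventually_ge_atTop (c + α)] with lam h0 h1 hlog
    have hlx : Real.log (lam/p) = Real.log lam - c := Real.log_div (ne_of_gt h0) (ne_of_gt hp)
    have hxpos : 0 < lam/p := by positivity
    have hx1 : 1 ≤ lam/p := by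
      calc (1:ℝ) = Real.exp 0 := Real.exp_zero.symm
        _ ≤ Real.exp (Real.log (lam/p)) := Real.exp_le_exp.2 (by rw [hlx]; linarith)
        _ = lam/p := Real.exp_log hxpos
    have hq : 0 < (Real.log lam)^2/(2*α) := by
      have : 0 < Real.log lam := Real.log_pos h1
      positivity
    have := upper α (lam/p) hα hx1
    rw [hlx] at this
    exact div_le_div_of_nonneg_right this hq.le
end

section
/- Let α > 0 and let μ be the infinite product probability measure on ℕ → ℝ all of whose coordinates are independent exponential random variables of rate 1. Then: (i) for μ-almost every x, the series Σ_{k=0}^∞ e^{-αk}·x(k) converges; and (ii) for every real λ ≥ 0, ∫ exp(-λ·Σ_{k=0}^∞ e^{-αk}·x(k)) dμ(x) = ∏_{k=0}^∞ (1 + λ·e^{-αk})^{-1}, where the infinite product converges. -/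
/-!
Each term `e^{-αk} x k` is nonnegative with mean `e^{-αk}`, a summable sequence, so the series
converges almost everywhere. For `λ ≥ 0` the functions `exp (-λ ∑_{k ∈ s} e^{-αk} x k)`, indexed by
finite sets `s`, are bounded by `1`; by independence their integrals are the finite products of the
Laplace transforms `(1 + λ e^{-αk})⁻¹` of the exponential law, and dominated convergence along the
net of finite sets identifies the limit as an unconditional infinite product.
-/

open MeasureTheory ProbabilityTheory Real Set Filter

namespace ProbabilityTheory

lemma ae_nonneg_expMeasure (r : ℝ) : ∀ᵐ x ∂expMeasure r, 0 ≤ x := by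
  have h : expMeasure r (Iio 0) = 0 := by
    rw [expMeasure, gammaMeasure, withDensity_apply _ measurableSet_Iio]
    exact lintegral_exponentialPDF_of_nonpos le_rfl
  exact (measure_eq_zero_iff_ae_notMem.mp h).mono fun x hx => not_lt.mp hx

lemma integral_expMeasure_eq_integral_Ioi {r : ℝ} (hr : 0 < r) (f : ℝ → ℝ) :
    ∫ x, f x ∂expMeasure r = ∫ x in Ioi 0, r * exp (-(r * x)) * f x := by
  change ∫ x, f x ∂volume.withDensity (exponentialPDF r) = _
  rw [integral_withDensity_eq_integral_toReal_smul (f := exponentialPDF r)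
    (measurable_exponentialPDFReal r).ennreal_ofReal (ae_of_all _ fun _ => ENNReal.ofReal_lt_top),
    ← integral_Ici_eq_integral_Ioi, ← setIntegral_eq_integral_of_forall_compl_eq_zero]
  · refine setIntegral_congr_fun measurableSet_Ici fun x (hx : 0 ≤ x) => ?_
    rw [exponentialPDF_of_nonneg hx, ENNReal.toReal_ofReal (by positivity), smul_eq_mul]
  · intro x (hx : ¬ 0 ≤ x)
    rw [exponentialPDF_of_neg (not_le.mp hx), ENNReal.toReal_zero, zero_smul]

lemma mgf_id_expMeasure {r s : ℝ} (hr : 0 < r) (hs : s < r) :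
    mgf id (expMeasure r) s = r / (r - s) := by
  have hexp (x : ℝ) : r * exp (-(r * x)) * exp (s * id x) = r * exp ((s - r) * x) := by
    rw [mul_assoc, ← exp_add, id]
    ring_nf
  rw [mgf, integral_expMeasure_eq_integral_Ioi hr, funext hexp, integral_const_mul,
    integral_exp_mul_Ioi (by linarith) 0, mul_zero, exp_zero, neg_div, ← div_neg, neg_sub,
    mul_one_div]

lemma integrable_exp_mul_expMeasure {r s : ℝ} (hr : 0 < r) (hs : s < r) :
    Integrable (fun x => exp (s * x)) (expMeasure r) :=
  Integrable.of_integral_ne_zero <|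
    (mgf_id_expMeasure hr hs).trans_ne (div_pos hr (sub_pos.2 hs)).ne'

lemma integrable_id_expMeasure {r : ℝ} (hr : 0 < r) : Integrable id (expMeasure r) := by
  have h := integrable_pow_of_integrable_exp_mul (half_pos hr).ne'
    (integrable_exp_mul_expMeasure hr (by linarith))
    (integrable_exp_mul_expMeasure hr (by linarith)) 1
  simp only [pow_one] at h
  exact h

lemma ae_summable_const_mul_of_map_eq {Ω ι : Type*} [MeasurableSpace Ω] {μ : Measure Ω}
    [Countable ι] {ν : Measure ℝ} {Y : ι → Ω → ℝ} (hY : ∀ i, AEMeasurable (Y i) μ)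
    (hlaw : ∀ i, μ.map (Y i) = ν) (hν : Integrable id ν) {c : ι → ℝ} (hc : Summable c) :
    ∀ᵐ ω ∂μ, Summable fun i => c i * Y i ω := by
  have hnorm (i : ι) : eLpNorm (fun ω => c i * Y i ω) 1 μ = ‖c i‖ₑ * eLpNorm id 1 ν := by
    rw [← hlaw i, eLpNorm_map_measure (f := Y i) aestronglyMeasurable_id (hY i),
      ← eLpNorm_const_smul]
    rfl
  refine (summable_norm_of_tsum_eLpNorm_ne_top le_rfl
    (fun i => ((hY i).const_mul (c i)).aestronglyMeasurable) ?_).mono fun ω hω => hω.of_norm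
  rw [funext hnorm, ENNReal.tsum_mul_right]
  exact ENNReal.mul_ne_top (tsum_enorm_ne_top_iff_summable_norm.2 hc.norm)
    (memLp_one_iff_integrable.2 hν).eLpNorm_ne_top

theorem iIndepFun.hasProd_mgf_tsum {Ω ι : Type*} [MeasurableSpace Ω] {μ : Measure Ω}
    [Countable ι] {X : ι → Ω → ℝ} (h_indep : iIndepFun X μ) (h_meas : ∀ i, AEMeasurable (X i) μ)
    (h_nonneg : ∀ᵐ ω ∂μ, ∀ i, 0 ≤ X i ω) (h_sum : ∀ᵐ ω ∂μ, Summable fun i => X i ω)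
    {t : ℝ} (ht : t ≤ 0) :
    HasProd (fun i => mgf (X i) μ t) (mgf (fun ω => ∑' i, X i ω) μ t) := by
  have := h_indep.isProbabilityMeasure
  have h_partial (s : Finset ι) :
      ∏ i ∈ s, mgf (X i) μ t = ∫ ω, exp (t * ∑ i ∈ s, X i ω) ∂μ := by
    rw [← h_indep.mgf_sum₀ h_meas, mgf]
    simp only [Finset.sum_apply]
  simp only [HasProd, SummationFilter.unconditional_filter, h_partial]
  refine tendsto_integral_filter_of_norm_le_const (Eventually.of_forall fun s => ?_)
    ⟨1, Eventually.of_forall fun s => ?_⟩ ?_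
  · fun_prop
  · filter_upwards [h_nonneg] with ω hω
    rw [norm_of_nonneg (exp_pos _).le, exp_le_one_iff]
    exact mul_nonpos_of_nonpos_of_nonneg ht (Finset.sum_nonneg fun i _ => hω i)
  · filter_upwards [h_sum] with ω hω
    exact ((continuous_exp.comp (continuous_const_mul t)).tendsto _).comp hω.hasSum

end ProbabilityTheory

theorem stmt_7_general (α : ℝ) (hα : 0 < α) (μ : Measure (ℕ → ℝ))
    (hindep : iIndepFun (m := fun _ : ℕ => (inferInstance : MeasurableSpace ℝ))
      (fun (k : ℕ) (x : ℕ → ℝ) => x k) μ)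
    (hlaw : ∀ k : ℕ, μ.map (fun x : ℕ → ℝ => x k) = expMeasure 1) :
    (∀ᵐ x ∂μ, Summable fun k : ℕ => Real.exp (-α * k) * x k) ∧
    ∀ lam : ℝ, 0 ≤ lam →
      Multipliable (fun k : ℕ => (1 + lam * Real.exp (-α * k))⁻¹) ∧
      ∫ x, Real.exp (-lam * ∑' k : ℕ, Real.exp (-α * k) * x k) ∂μ
        = ∏' k : ℕ, (1 + lam * Real.exp (-α * k))⁻¹ := by
  set c : ℕ → ℝ := fun k => exp (-α * k)
  have hc : Summable c :=
    (summable_exp_nat_mul_iff.2 (neg_neg_of_pos hα)).congr fun k => by rw [mul_comm]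
  set X : ℕ → (ℕ → ℝ) → ℝ := fun k x => c k * x k
  have hX_indep : iIndepFun X μ :=
    hindep.comp (fun k t => c k * t) fun k => measurable_id.const_mul (c k)
  have hX_nonneg : ∀ᵐ x ∂μ, ∀ k, 0 ≤ X k x := by
    refine ae_all_iff.2 fun k => ?_
    have h := ae_of_ae_map (measurable_pi_apply k).aemeasurable
      ((hlaw k).symm ▸ ae_nonneg_expMeasure 1)
    filter_upwards [h] with x hx using mul_nonneg (exp_pos _).le hx
  have hX_sum : ∀ᵐ x ∂μ, Summable fun k => X k x :=
    ae_summable_const_mul_of_map_eq (fun k => (measurable_pi_apply k).aemeasurable) hlaw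
      (integrable_id_expMeasure one_pos) hc
  refine ⟨hX_sum, fun lam hlam => ?_⟩
  have hX_mgf (k : ℕ) : mgf (X k) μ (-lam) = (1 + lam * c k)⁻¹ := by
    have hs : c k * -lam < 1 :=
      (mul_nonpos_of_nonneg_of_nonpos (exp_pos _).le (neg_nonpos.2 hlam)).trans_lt one_pos
    rw [mgf_const_mul, ← mgf_id_map (measurable_pi_apply k).aemeasurable, hlaw k,
      mgf_id_expMeasure one_pos hs]
    ring
  have h := hX_indep.hasProd_mgf_tsum
    (fun k => by fun_prop) hX_nonneg hX_sum
    (neg_nonpos.2 hlam)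
  simp only [hX_mgf] at h
  exact ⟨h.multipliable, h.tprod_eq.symm⟩

theorem stmt_7 (α : ℝ) (hα : 0 < α) (μ : Measure (ℕ → ℝ)) [IsProbabilityMeasure μ]
    (hindep : iIndepFun (m := fun _ : ℕ => (inferInstance : MeasurableSpace ℝ))
      (fun (k : ℕ) (x : ℕ → ℝ) => x k) μ)
    (hlaw : ∀ k : ℕ, μ.map (fun x : ℕ → ℝ => x k) = expMeasure 1) :
    (∀ᵐ x ∂μ, Summable fun k : ℕ => Real.exp (-α * k) * x k) ∧
    ∀ lam : ℝ, 0 ≤ lam →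
      Multipliable (fun k : ℕ => (1 + lam * Real.exp (-α * k))⁻¹) ∧
      ∫ x, Real.exp (-lam * ∑' k : ℕ, Real.exp (-α * k) * x k) ∂μ
        = ∏' k : ℕ, (1 + lam * Real.exp (-α * k))⁻¹ :=
  stmt_7_general α hα μ hindep hlaw
end

section
/- Let α > 0 and let X be a nonnegative real random variable on a probability space with probability measure P. Assume that -log E[e^{-λX}] / ((log λ)²/(2α)) tends to 1 as λ → +∞. Then -log P(X ≤ x) / ((log x)²/(2α)) tends to 1 as x → 0⁺. -/
/-!
Write `L t = E[exp (-t X)]` and `p x = P(X ≤ x)`. The Chernoff bound `p x ≤ e^{t x} L t` at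
`t = 1/x` gives `-log p x ≥ -log L (1/x) - 1`, which is asymptotically `(log x)² / (2α)`.
Conversely `L t ≤ p x + e^{-t x}`; at `t = y³/x` with `y = -log x` the error `e^{-y³}` is at most
`L t / 2`, because `-log L t` is only of order `(log t)² ~ y²`. Hence
`-log p x ≤ -log L t + log 2`, again asymptotically `(log x)² / (2α)` since `log t = y + 3 log y`.
-/

open MeasureTheory Filter Real Topology

lemma neg_log_sub_le_neg_log_of_le_exp_mul {l p s : ℝ} (hp : 0 < p) (h : p ≤ exp s * l) :
    -log l - s ≤ -log p := by
  have hl : 0 < l := pos_of_mul_pos_right (hp.trans_le h) (exp_pos s).le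
  have hlog := log_le_log hp h
  rw [log_mul (exp_pos s).ne' hl.ne', log_exp] at hlog
  linarith

lemma neg_log_le_of_le_add_exp {l p s : ℝ} (hl : 0 < l) (h : l ≤ p + exp (-s))
    (hs : -log l + log 2 ≤ s) : 0 < p ∧ -log p ≤ -log l + log 2 := by
  have hexp : exp (-s) ≤ l / 2 := by
    rw [← exp_log (half_pos hl), log_div hl.ne' two_ne_zero]
    exact exp_le_exp.2 (by linarith)
  have hp : l / 2 ≤ p := by linarith
  have hlog := log_le_log (half_pos hl) hp
  rw [log_div hl.ne' two_ne_zero] at hlog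
  exact ⟨(half_pos hl).trans_le hp, by linarith⟩

lemma tendsto_neg_log_nhdsGT_zero : Tendsto (fun x ↦ -log x) (𝓝[>] 0) atTop :=
  tendsto_neg_atBot_atTop.comp tendsto_log_nhdsGT_zero

lemma tendsto_log_sq_div_nhdsGT_zero {c : ℝ} (hc : 0 < c) :
    Tendsto (fun x ↦ log x ^ 2 / c) (𝓝[>] 0) atTop := by
  refine (((tendsto_pow_atTop two_ne_zero).comp tendsto_neg_log_nhdsGT_zero).atTop_div_const
    hc).congr fun x ↦ ?_
  simp only [Function.comp, neg_sq]

lemma tendsto_neg_log_pow_three_div_nhdsGT_zero :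
    Tendsto (fun x ↦ (-log x) ^ 3 / x) (𝓝[>] 0) atTop :=
  (((tendsto_pow_atTop three_ne_zero).comp tendsto_neg_log_nhdsGT_zero).atTop_mul_atTop₀
    tendsto_inv_nhdsGT_zero).congr fun _ ↦ (div_eq_mul_inv _ _).symm

-- With `y = -log x`, `log ((-log x) ^ 3 / x) = y + 3 log y`.
lemma tendsto_log_neg_log_pow_three_div_sq_div_log_sq :
    Tendsto (fun x ↦ log ((-log x) ^ 3 / x) ^ 2 / log x ^ 2) (𝓝[>] 0) (𝓝 1) := by
  have hy : Tendsto (fun y ↦ ((y + 3 * log y) / y) ^ 2) atTop (𝓝 1) := by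
    have h := ((isLittleO_log_id_atTop.tendsto_div_nhds_zero.const_mul 3).const_add 1).pow 2
    norm_num at h
    refine h.congr' ?_
    filter_upwards [eventually_gt_atTop 0] with y hy
    field_simp
  refine (hy.comp tendsto_neg_log_nhdsGT_zero).congr' ?_
  filter_upwards [self_mem_nhdsWithin, tendsto_neg_log_nhdsGT_zero.eventually_gt_atTop 0]
    with x hx hyx
  rw [Function.comp_apply, log_div (by positivity) (ne_of_gt hx), log_pow, div_pow, neg_sq]
  push_cast
  ring

section LogSqScale

variable {F : ℝ → ℝ} {α : ℝ}

lemma tendsto_comp_inv_sub_div_log_sq (hα : 0 < α)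
    (hF : Tendsto (fun t ↦ F t / (log t ^ 2 / (2 * α))) atTop (𝓝 1)) (c : ℝ) :
    Tendsto (fun x ↦ (F x⁻¹ - c) / (log x ^ 2 / (2 * α))) (𝓝[>] 0) (𝓝 1) := by
  have h := (hF.comp tendsto_inv_nhdsGT_zero).sub
    ((tendsto_log_sq_div_nhdsGT_zero (c := 2 * α) (by positivity)).inv_tendsto_atTop.const_mul c)
  rw [mul_zero, sub_zero] at h
  refine h.congr fun x ↦ ?_
  simp only [Function.comp_apply, log_inv, neg_sq, Pi.inv_apply]
  ring

lemma tendsto_comp_neg_log_pow_three_div_add_div_log_sq (hα : 0 < α)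
    (hF : Tendsto (fun t ↦ F t / (log t ^ 2 / (2 * α))) atTop (𝓝 1)) (c : ℝ) :
    Tendsto (fun x ↦ (F ((-log x) ^ 3 / x) + c) / (log x ^ 2 / (2 * α))) (𝓝[>] 0) (𝓝 1) := by
  have h := ((hF.comp tendsto_neg_log_pow_three_div_nhdsGT_zero).mul
    tendsto_log_neg_log_pow_three_div_sq_div_log_sq).add
    ((tendsto_log_sq_div_nhdsGT_zero (c := 2 * α) (by positivity)).inv_tendsto_atTop.const_mul c)
  rw [mul_one, mul_zero, add_zero] at h
  refine h.congr' ?_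
  filter_upwards [tendsto_neg_log_pow_three_div_nhdsGT_zero.eventually
    (tendsto_log_atTop.eventually_gt_atTop 0)] with x hx
  simp only [Function.comp_apply, Pi.inv_apply]
  generalize (-log x) ^ 3 / x = t at hx ⊢
  field_simp [hx.ne']

end LogSqScale

namespace ProbabilityTheory

variable {Ω : Type*} [MeasurableSpace Ω] {μ : Measure Ω} {X : Ω → ℝ} {t : ℝ}

lemma integrable_exp_mul_of_nonpos [IsFiniteMeasure μ] (hX : AEMeasurable X μ)
    (hX0 : ∀ᵐ ω ∂μ, 0 ≤ X ω) (ht : t ≤ 0) : Integrable (fun ω ↦ exp (t * X ω)) μ := by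
  refine .of_mem_Icc 0 1 (measurable_exp.comp_aemeasurable (hX.const_mul t)) ?_
  filter_upwards [hX0] with ω hω
  exact ⟨(exp_pos _).le, exp_le_one_iff.2 (mul_nonpos_of_nonpos_of_nonneg ht hω)⟩

lemma mgf_le_measureReal_le_add_exp [IsProbabilityMeasure μ] (hX : Measurable X)
    (hX0 : ∀ ω, 0 ≤ X ω) (ht : t ≤ 0) (x : ℝ) :
    mgf X μ t ≤ μ.real {ω | X ω ≤ x} + exp (t * x) := by
  have hs : MeasurableSet {ω | X ω ≤ x} := hX measurableSet_Iic
  have hpointwise :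
      (fun ω ↦ exp (t * X ω)) ≤ fun ω ↦ {ω | X ω ≤ x}.indicator 1 ω + exp (t * x) := by
    intro ω
    by_cases hω : X ω ≤ x
    · simp only [Set.indicator_of_mem (show ω ∈ {ω | X ω ≤ x} from hω), Pi.one_apply]
      linarith [exp_le_one_iff.2 (mul_nonpos_of_nonpos_of_nonneg ht (hX0 ω)), exp_pos (t * x)]
    · simp only [Set.indicator_of_notMem (show ω ∉ {ω | X ω ≤ x} from hω), zero_add]
      exact exp_le_exp.2 (mul_le_mul_of_nonpos_left (not_le.1 hω).le ht)
  calc mgf X μ t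
      ≤ ∫ ω, ({ω | X ω ≤ x}.indicator 1 ω + exp (t * x)) ∂μ :=
        integral_mono (integrable_exp_mul_of_nonpos hX.aemeasurable (ae_of_all _ hX0) ht)
          (((integrable_const 1).indicator hs).add (integrable_const _)) hpointwise
    _ = μ.real {ω | X ω ≤ x} + exp (t * x) := by
        rw [integral_add ((integrable_const 1).indicator hs) (integrable_const _),
          integral_indicator_one hs, integral_const, probReal_univ, one_smul]

end ProbabilityTheory

open ProbabilityTheory

theorem tendsto_neg_log_div_log_sq_of_laplace {α : ℝ} (hα : 0 < α) {L p : ℝ → ℝ}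
    (hL : Tendsto (fun t ↦ -log (L t) / (log t ^ 2 / (2 * α))) atTop (𝓝 1))
    (hL_pos : ∀ t, 0 < t → 0 < L t)
    (hchernoff : ∀ x t, 0 < t → p x ≤ exp (t * x) * L t)
    (hsplit : ∀ x t, 0 < t → L t ≤ p x + exp (-t * x)) :
    Tendsto (fun x ↦ -log (p x) / (log x ^ 2 / (2 * α))) (𝓝[>] 0) (𝓝 1) := by
  have hlower := tendsto_comp_inv_sub_div_log_sq hα hL 1
  have hupper := tendsto_comp_neg_log_pow_three_div_add_div_log_sq hα hL (log 2)
  have hbounds : ∀ᶠ x in 𝓝[>] 0, -log (L x⁻¹) - 1 ≤ -log (p x) ∧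
      -log (p x) ≤ -log (L ((-log x) ^ 3 / x)) + log 2 := by
    filter_upwards [self_mem_nhdsWithin, hupper.eventually (eventually_le_nhds one_lt_two),
      tendsto_neg_log_nhdsGT_zero.eventually_ge_atTop α⁻¹,
      tendsto_neg_log_pow_three_div_nhdsGT_zero.eventually_gt_atTop 0]
      with x (hx : 0 < x) hratio hyα ht
    set y := -log x
    have hy : 0 < y := (inv_pos.2 hα).trans_le hyα
    have hsq : log x ^ 2 = y ^ 2 := (neg_sq (log x)).symm
    -- With `t = y ^ 3 / x` the term `exp (-t x) = exp (-y ^ 3)` is negligible against `L t`.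
    have hsmall : -log (L (y ^ 3 / x)) + log 2 ≤ y ^ 3 / x * x := by
      rw [hsq] at hratio
      rw [div_le_iff₀ (by positivity)] at hratio
      calc -log (L (y ^ 3 / x)) + log 2 ≤ 2 * (y ^ 2 / (2 * α)) := hratio
        _ = y ^ 2 * α⁻¹ := by field_simp
        _ ≤ y ^ 2 * y := by gcongr
        _ = y ^ 3 / x * x := by field_simp
    obtain ⟨hp, hp_upper⟩ := neg_log_le_of_le_add_exp (hL_pos _ ht)
      (by simpa only [neg_mul] using hsplit x _ ht) hsmall
    refine ⟨neg_log_sub_le_neg_log_of_le_exp_mul hp ?_, hp_upper⟩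
    simpa only [inv_mul_cancel₀ hx.ne'] using hchernoff x x⁻¹ (inv_pos.2 hx)
  refine tendsto_of_tendsto_of_tendsto_of_le_of_le' hlower hupper ?_ ?_
  all_goals filter_upwards [hbounds] with x hx
  · exact div_le_div_of_nonneg_right hx.1 (by positivity)
  · exact div_le_div_of_nonneg_right hx.2 (by positivity)

theorem stmt_8 {Ω : Type*} [MeasurableSpace Ω] (P : Measure Ω) [IsProbabilityMeasure P]
    (α : ℝ) (hα : 0 < α) (X : Ω → ℝ) (hX : Measurable X) (hX0 : ∀ ω, 0 ≤ X ω)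
    (h : Filter.Tendsto
      (fun lam : ℝ =>
        -Real.log (∫ ω, Real.exp (-lam * X ω) ∂P) / ((Real.log lam) ^ 2 / (2 * α)))
      Filter.atTop (nhds 1)) :
    Filter.Tendsto
      (fun x : ℝ =>
        -Real.log ((P {ω | X ω ≤ x}).toReal) / ((Real.log x) ^ 2 / (2 * α)))
      (nhdsWithin 0 (Set.Ioi 0)) (nhds 1) := by
  have hint (t : ℝ) (ht : 0 < t) : Integrable (fun ω ↦ exp (-t * X ω)) P :=
    integrable_exp_mul_of_nonpos hX.aemeasurable (ae_of_all _ hX0) (neg_nonpos.2 ht.le)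
  refine tendsto_neg_log_div_log_sq_of_laplace hα h (fun t ht ↦ mgf_pos (hint t ht))
    (fun x t ht ↦ ?_) (fun x t ht ↦ mgf_le_measureReal_le_add_exp hX hX0 (neg_nonpos.2 ht.le) x)
  simpa only [neg_neg, measureReal_def, mgf] using
    measure_le_le_exp_mul_mgf x (neg_nonpos.2 ht.le) (hint t ht)
end

section
/- Let X be a nonnegative real random variable on a probability space with probability measure P, let α > 1 and C > 0, and assume liminf_{λ → +∞} (-log E[e^{-λX}]) / λ^{1/α} ≥ α / C^{1/α}. Then for every δ ∈ (0,1) there exists x₀ > 0 such that for all x ∈ (0, x₀): P(X ≤ x) ≤ exp(-δ(α-1)/(Cx)^{1/(α-1)}). -/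
/-!
Chernoff's bound `P(X ≤ x) ≤ e^{λx} E[e^{-λX}]`, where the liminf hypothesis gives
`E[e^{-λX}] ≤ exp(-b λ^{1/α})` for large `λ` whenever `b < α / C^{1/α}`. Taking
`b = (1 + δ(α-1)) / C^{1/α}` and `λ = C t^α` with `t = (Cx)^{-1/(α-1)}`, the exponent
`λx - b λ^{1/α}` equals `t - (1 + δ(α-1)) t = -δ(α-1) t`, and `λ → ∞` as `x → 0⁺`.
-/

open MeasureTheory ProbabilityTheory Filter Topology Real

lemma Real.eventually_lt_of_lt_liminf_of_nonneg {ι : Type*} {f : Filter ι} {u : ι → ℝ} {b : ℝ}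
    (hb : 0 ≤ b) (h : b < liminf u f) : ∀ᶠ i in f, b < u i := by
  by_cases hu : f.IsBoundedUnder (· ≥ ·) u
  · exact eventually_lt_of_lt_liminf h hu
  · -- then `liminf u f` is the junk value `sSup ∅ = 0`
    rw [Real.liminf_of_not_isBoundedUnder hu] at h
    exact absurd h hb.not_gt

section Chernoff

variable {Ω : Type*} [MeasurableSpace Ω] {μ : Measure Ω} {X : Ω → ℝ}

lemma integrable_exp_neg_mul_of_nonneg [IsFiniteMeasure μ] (hX : AEMeasurable X μ)
    (hX0 : ∀ᵐ ω ∂μ, 0 ≤ X ω) {lam : ℝ} (hlam : 0 ≤ lam) :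
    Integrable (fun ω ↦ exp (-lam * X ω)) μ :=
  .of_mem_Icc 0 1 (measurable_exp.comp_aemeasurable (hX.const_mul _)) <| by
    filter_upwards [hX0] with ω hω
    exact ⟨(exp_pos _).le, exp_le_one_iff.2 (by nlinarith)⟩

lemma measureReal_le_exp_of_le_neg_log_integral [IsProbabilityMeasure μ] (hX : AEMeasurable X μ)
    (hX0 : ∀ᵐ ω ∂μ, 0 ≤ X ω) {lam c : ℝ} (hlam : 0 ≤ lam)
    (hc : c ≤ -log (∫ ω, exp (-lam * X ω) ∂μ)) (x : ℝ) :
    μ.real {ω | X ω ≤ x} ≤ exp (lam * x - c) := by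
  have hint := integrable_exp_neg_mul_of_nonneg hX hX0 hlam
  have hmgf : mgf X μ (-lam) ≤ exp (-c) := by
    rw [← log_le_iff_le_exp (mgf_pos hint), mgf]
    linarith
  calc μ.real {ω | X ω ≤ x} ≤ exp (-(-lam) * x) * mgf X μ (-lam) :=
        measure_le_le_exp_mul_mgf x (neg_nonpos.2 hlam) hint
    _ ≤ exp (lam * x) * exp (-c) := by rw [neg_neg]; gcongr
    _ = exp (lam * x - c) := by rw [← exp_add, sub_eq_add_neg]

end Chernoff

section ChernoffParam

noncomputable def chernoffParam (α C x : ℝ) : ℝ := C * ((C * x)⁻¹ ^ (1 / (α - 1))) ^ α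

variable {α C x : ℝ}

lemma chernoffParam_mul (hα : 1 < α) (hC : 0 < C) (hx : 0 < x) :
    chernoffParam α C x * x = ((C * x) ^ (1 / (α - 1)))⁻¹ := by
  have hCx : 0 < C * x := mul_pos hC hx
  rw [chernoffParam, inv_rpow hCx.le]
  set s := (C * x) ^ (1 / (α - 1)) with hs_def
  have hs : 0 < s := rpow_pos_of_pos hCx _
  have hsα1 : s ^ (α - 1) = C * x := by
    rw [hs_def, ← rpow_mul hCx.le, one_div_mul_cancel (by linarith), rpow_one]
  have hsα : s ^ α = C * x * s := by
    rw [← hsα1, ← rpow_add_one hs.ne', sub_add_cancel]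
  rw [inv_rpow hs.le, hsα]
  field_simp

lemma chernoffParam_rpow_one_div (hα : 1 < α) (hC : 0 < C) (hx : 0 < x) :
    chernoffParam α C x ^ (1 / α) = C ^ (1 / α) * ((C * x) ^ (1 / (α - 1)))⁻¹ := by
  rw [chernoffParam, mul_rpow hC.le (by positivity), one_div α,
    rpow_rpow_inv (by positivity) (by linarith), ← inv_rpow (mul_pos hC hx).le]

lemma tendsto_chernoffParam (hα : 1 < α) (hC : 0 < C) :
    Tendsto (chernoffParam α C) (𝓝[>] 0) atTop := by
  have hCx : Tendsto (fun x ↦ (C * x)⁻¹) (𝓝[>] 0) atTop := by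
    simp_rw [mul_inv]
    exact tendsto_inv_nhdsGT_zero.const_mul_atTop (inv_pos.2 hC)
  exact ((tendsto_rpow_atTop (by linarith)).comp
    ((tendsto_rpow_atTop (by bound)).comp hCx)).const_mul_atTop hC

end ChernoffParam

theorem stmt_9 {Ω : Type*} [MeasurableSpace Ω] (P : Measure Ω) [IsProbabilityMeasure P]
    (X : Ω → ℝ) (hX : Measurable X) (hX0 : ∀ ω, 0 ≤ X ω)
    (α C : ℝ) (hα : 1 < α) (hC : 0 < C)
    (h : α / C ^ (1 / α) ≤
      Filter.liminf
        (fun lam : ℝ => -Real.log (∫ ω, Real.exp (-lam * X ω) ∂P) / lam ^ (1 / α))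
        Filter.atTop) :
    ∀ δ : ℝ, 0 < δ → δ < 1 → ∃ x₀ > 0, ∀ x : ℝ, 0 < x → x < x₀ →
      (P {ω | X ω ≤ x}).toReal ≤ Real.exp (-δ * (α - 1) / (C * x) ^ (1 / (α - 1))) := by
  intro δ hδ0 hδ1
  set b := (1 + δ * (α - 1)) / C ^ (1 / α) with hb_def
  have hb : b < liminf (fun lam : ℝ ↦ -log (∫ ω, exp (-lam * X ω) ∂P) / lam ^ (1 / α)) atTop :=
    lt_of_lt_of_le (by rw [hb_def]; gcongr; nlinarith) h
  have hlaplace : ∀ᶠ lam in atTop, b * lam ^ (1 / α) ≤ -log (∫ ω, exp (-lam * X ω) ∂P) := by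
    filter_upwards [Real.eventually_lt_of_lt_liminf_of_nonneg (by positivity) hb,
      eventually_gt_atTop 0] with lam hlt hlam
    exact (le_div_iff₀ (rpow_pos_of_pos hlam _)).1 hlt.le
  have hparam := tendsto_chernoffParam hα hC
  have htail : ∀ᶠ x in 𝓝[>] 0,
      P.real {ω | X ω ≤ x} ≤ exp (-δ * (α - 1) / (C * x) ^ (1 / (α - 1))) := by
    filter_upwards [hparam.eventually hlaplace, hparam.eventually (eventually_ge_atTop 0),
      self_mem_nhdsWithin] with x hlaplace_x hparam_x hx
    convert measureReal_le_exp_of_le_neg_log_integral hX.aemeasurable (ae_of_all _ hX0)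
      hparam_x hlaplace_x x using 2
    rw [chernoffParam_mul hα hC hx, chernoffParam_rpow_one_div hα hC hx, hb_def]
    field_simp
    ring
  obtain ⟨x₀, hx₀, hx⟩ := (nhdsGT_basis 0).eventually_iff.1 htail
  exact ⟨x₀, hx₀, fun x hx0 hxx₀ ↦ hx ⟨hx0, hxx₀⟩⟩
end

section
/- Let α ≥ 1, y > 0 and let Φ : [0,∞) → [0,∞) be nondecreasing. Assume there exist K > 0 and M > 0 with Φ(λ) ≤ Kλ for all λ ∈ [0, M], and there exist C ≥ 0 and λ₀ > 0 with Φ(λ) ≤ C·λ^{1/α} for all λ ≥ λ₀. Then for every λ ≥ 0 the series Σ_{k=0}^∞ Φ(e^{-ky}·λ) converges, and limsup_{λ → +∞} (Σ_{k=0}^∞ Φ(e^{-ky}·λ)) / λ^{1/α} ≤ C/(1 - e^{-y/α}). -/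
theorem stmt_11 (α y : ℝ) (hα : 1 ≤ α) (hy : 0 < y) (Φ : ℝ → ℝ)
    (hΦ0 : ∀ lam : ℝ, 0 ≤ lam → 0 ≤ Φ lam)
    (hmono : ∀ a b : ℝ, 0 ≤ a → a ≤ b → Φ a ≤ Φ b)
    (K M : ℝ) (hK : 0 < K) (hM : 0 < M)
    (hlin : ∀ lam : ℝ, 0 ≤ lam → lam ≤ M → Φ lam ≤ K * lam)
    (C lam₀ : ℝ) (hC : 0 ≤ C) (hlam₀ : 0 < lam₀)
    (hpow : ∀ lam : ℝ, lam₀ ≤ lam → Φ lam ≤ C * lam ^ (1 / α)) :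
    (∀ lam : ℝ, 0 ≤ lam → Summable fun k : ℕ => Φ (Real.exp (-k * y) * lam)) ∧
    Filter.limsup
      (fun lam : ℝ => (∑' k : ℕ, Φ (Real.exp (-k * y) * lam)) / lam ^ (1 / α))
      Filter.atTop ≤ C / (1 - Real.exp (-y / α)) := by
  have hα0 : 0 < α := lt_of_lt_of_le one_pos hα
  have h1α : 0 < 1 / α := by positivity
  set θ : ℝ := 1 / (2 * α) with hθdef
  have hθpos : 0 < θ := by positivity
  have hθlt : θ < 1 / α := by
    rw [hθdef, div_lt_div_iff₀ (by positivity) hα0]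
    nlinarith
  have hθle1 : θ ≤ 1 := by
    rw [hθdef, div_le_one (by positivity)]; linarith
  set B : ℝ := C * lam₀ ^ (1 / α) with hBdef
  have hB0 : 0 ≤ B := by positivity
  set K' : ℝ := max K (B / M) with hK'def
  have hK'0 : 0 ≤ K' := le_trans hK.le (le_max_left _ _)
  set D : ℝ := K' * lam₀ ^ (1 - θ) with hDdef
  have hD0 : 0 ≤ D := by positivity
  -- key pointwise bound for x ≤ lam₀
  have hsmall : ∀ x : ℝ, 0 ≤ x → x ≤ lam₀ → Φ x ≤ K' * x := by
    intro x hx hxl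
    rcases le_or_gt x M with h | h
    · exact le_trans (hlin x hx h) (by nlinarith [le_max_left K (B / M)])
    · have h1 : Φ x ≤ B := le_trans (hmono x lam₀ hx hxl) (hpow lam₀ le_rfl)
      have h2 : B ≤ (B / M) * x := by
        rw [div_mul_eq_mul_div, le_div_iff₀ hM]
        nlinarith
      have h3 : (B / M) * x ≤ K' * x := by
        apply mul_le_mul_of_nonneg_right (le_max_right _ _) hx
      linarith
  -- global pointwise bound
  have hkey : ∀ x : ℝ, 0 ≤ x → Φ x ≤ C * x ^ (1 / α) + D * x ^ θ := by
    intro x hx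
    rcases le_or_gt lam₀ x with h | h
    · have := hpow x h
      have h2 : 0 ≤ D * x ^ θ := by positivity
      linarith
    · have h1 : Φ x ≤ K' * x := hsmall x hx h.le
      have h2 : K' * x ≤ D * x ^ θ := by
        rcases eq_or_lt_of_le hx with rfl | hx0
        · simp [Real.zero_rpow (ne_of_gt hθpos)]
        · have hx1 : x = x ^ (1 - θ) * x ^ θ := by
            rw [← Real.rpow_add hx0]; simp
          have h3 : x ^ (1 - θ) ≤ lam₀ ^ (1 - θ) :=
            Real.rpow_le_rpow hx h.le (by linarith)
          have h4 : x ^ (1 - θ) * x ^ θ = x := by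
            rw [← Real.rpow_add hx0]; simp
          calc K' * x = K' * (x ^ (1 - θ) * x ^ θ) := by rw [h4]
            _ ≤ K' * (lam₀ ^ (1 - θ) * x ^ θ) := by
                apply mul_le_mul_of_nonneg_left _ hK'0
                exact mul_le_mul_of_nonneg_right h3 (Real.rpow_nonneg hx θ)
            _ = D * x ^ θ := by rw [hDdef]; ring
      have h4 : 0 ≤ C * x ^ (1 / α) := by positivity
      linarith
  -- geometric data
  set q : ℝ := Real.exp (-(y / α)) with hqdef
  set r : ℝ := Real.exp (-(y * θ)) with hrdef
  have hq0 : 0 ≤ q := Real.exp_nonneg _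
  have hq1 : q < 1 := by
    rw [hqdef, Real.exp_lt_one_iff]
    have : 0 < y / α := by positivity
    linarith
  have hr0 : 0 ≤ r := Real.exp_nonneg _
  have hr1 : r < 1 := by
    rw [hrdef, Real.exp_lt_one_iff]
    have : 0 < y * θ := by positivity
    linarith
  -- rewrite the powers of the exponential
  have hexp1 : ∀ k : ℕ, (Real.exp (-k * y)) ^ (1 / α) = q ^ k := by
    intro k
    rw [← Real.exp_mul, hqdef, ← Real.exp_nat_mul]
    ring_nf
  have hexp2 : ∀ k : ℕ, (Real.exp (-k * y)) ^ θ = r ^ k := by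
    intro k
    rw [← Real.exp_mul, hrdef, ← Real.exp_nat_mul]
    ring_nf
  -- termwise bound
  have hterm : ∀ (lam : ℝ), 0 ≤ lam → ∀ k : ℕ,
      Φ (Real.exp (-k * y) * lam) ≤
        C * lam ^ (1 / α) * q ^ k + D * lam ^ θ * r ^ k := by
    intro lam hlam k
    have hx : 0 ≤ Real.exp (-k * y) * lam := by positivity
    have h1 := hkey _ hx
    rw [Real.mul_rpow (Real.exp_nonneg _) hlam, Real.mul_rpow (Real.exp_nonneg _) hlam,
      hexp1 k, hexp2 k] at h1
    calc Φ (Real.exp (-k * y) * lam)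
        ≤ C * (q ^ k * lam ^ (1 / α)) + D * (r ^ k * lam ^ θ) := h1
      _ = C * lam ^ (1 / α) * q ^ k + D * lam ^ θ * r ^ k := by ring
  have hgsum : ∀ lam : ℝ, Summable fun k : ℕ =>
      C * lam ^ (1 / α) * q ^ k + D * lam ^ θ * r ^ k :=
    fun lam => ((summable_geometric_of_lt_one hq0 hq1).mul_left _).add
      ((summable_geometric_of_lt_one hr0 hr1).mul_left _)
  have hsummable : ∀ lam : ℝ, 0 ≤ lam →
      Summable fun k : ℕ => Φ (Real.exp (-k * y) * lam) := by
    intro lam hlam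
    refine Summable.of_nonneg_of_le (fun k => hΦ0 _ (by positivity)) (hterm lam hlam)
      (hgsum lam)
  refine ⟨hsummable, ?_⟩
  -- bound on the tsum
  have htsum : ∀ lam : ℝ, 0 ≤ lam →
      (∑' k : ℕ, Φ (Real.exp (-k * y) * lam)) ≤
        C * lam ^ (1 / α) * (1 - q)⁻¹ + D * lam ^ θ * (1 - r)⁻¹ := by
    intro lam hlam
    have h1 := Summable.tsum_le_tsum (hterm lam hlam) (hsummable lam hlam) (hgsum lam)
    calc (∑' k : ℕ, Φ (Real.exp (-k * y) * lam))
        ≤ ∑' k : ℕ, (C * lam ^ (1 / α) * q ^ k + D * lam ^ θ * r ^ k) := h1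
      _ = C * lam ^ (1 / α) * (1 - q)⁻¹ + D * lam ^ θ * (1 - r)⁻¹ := by
          rw [Summable.tsum_add ((summable_geometric_of_lt_one hq0 hq1).mul_left _)
            ((summable_geometric_of_lt_one hr0 hr1).mul_left _),
            tsum_mul_left, tsum_mul_left,
            tsum_geometric_of_lt_one hq0 hq1, tsum_geometric_of_lt_one hr0 hr1]
  -- the dominating function
  set G : ℝ → ℝ := fun lam =>
    C * (1 - q)⁻¹ + D * (1 - r)⁻¹ * lam ^ (θ - 1 / α) with hGdef
  have hEv : ∀ᶠ lam in Filter.atTop,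
      (∑' k : ℕ, Φ (Real.exp (-k * y) * lam)) / lam ^ (1 / α) ≤ G lam := by
    filter_upwards [Filter.eventually_gt_atTop (0 : ℝ)] with lam hlam
    have hpow0 : (0 : ℝ) < lam ^ (1 / α) := Real.rpow_pos_of_pos hlam _
    rw [div_le_iff₀ hpow0, hGdef]
    have h1 := htsum lam hlam.le
    have h2 : lam ^ (θ - 1 / α) * lam ^ (1 / α) = lam ^ θ := by
      rw [← Real.rpow_add hlam]; ring_nf
    calc (∑' k : ℕ, Φ (Real.exp (-k * y) * lam))
        ≤ C * lam ^ (1 / α) * (1 - q)⁻¹ + D * lam ^ θ * (1 - r)⁻¹ := h1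
      _ = (C * (1 - q)⁻¹ + D * (1 - r)⁻¹ * lam ^ (θ - 1 / α)) * lam ^ (1 / α) := by
          rw [add_mul, mul_assoc (D * (1 - r)⁻¹), h2]; ring
  have hGlim : Filter.Tendsto G Filter.atTop (nhds (C * (1 - q)⁻¹)) := by
    have h1 : Filter.Tendsto (fun lam : ℝ => lam ^ (θ - 1 / α)) Filter.atTop (nhds 0) := by
      have := tendsto_rpow_neg_atTop (y := 1 / α - θ) (by linarith)
      simpa [neg_sub] using this
    have h2 : Filter.Tendsto (fun lam : ℝ => D * (1 - r)⁻¹ * lam ^ (θ - 1 / α))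
        Filter.atTop (nhds 0) := by
      simpa using h1.const_mul (D * (1 - r)⁻¹)
    have h3 := (tendsto_const_nhds (x := C * (1 - q)⁻¹) (f := Filter.atTop)).add h2
    rw [add_zero] at h3
    exact h3
  have hcoB : Filter.IsCoboundedUnder (· ≤ ·) Filter.atTop
      (fun lam : ℝ => (∑' k : ℕ, Φ (Real.exp (-k * y) * lam)) / lam ^ (1 / α)) := by
    apply Filter.isCoboundedUnder_le_of_eventually_le (x := 0) Filter.atTop
    filter_upwards [Filter.eventually_gt_atTop (0 : ℝ)] with lam hlam
    have : 0 ≤ ∑' k : ℕ, Φ (Real.exp (-k * y) * lam) :=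
      tsum_nonneg fun k => hΦ0 _ (by positivity)
    positivity
  have hbG : Filter.IsBoundedUnder (· ≤ ·) Filter.atTop G :=
    hGlim.isBoundedUnder_le
  have hfin : Filter.limsup
      (fun lam : ℝ => (∑' k : ℕ, Φ (Real.exp (-k * y) * lam)) / lam ^ (1 / α))
      Filter.atTop ≤ Filter.limsup G Filter.atTop :=
    Filter.limsup_le_limsup hEv hcoB hbG
  rw [hGlim.limsup_eq] at hfin
  have heq : C / (1 - Real.exp (-y / α)) = C * (1 - q)⁻¹ := by
    rw [neg_div, ← hqdef, div_eq_mul_inv]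
  rw [heq]
  exact hfin
end

section
/- Let α ≥ 1 and y > 0. Let Φ : [0,∞) → [0,∞) be nondecreasing with Φ(λ) > 0 for all λ > 0, and assume there exist K > 0 and M > 0 with Φ(λ) ≤ Kλ for all λ ∈ [0, M]. Assume moreover that Φ is regularly varying of index 1/α at infinity, i.e., for every t > 0, Φ(tλ)/Φ(λ) → t^{1/α} as λ → +∞. Then lim_{λ → +∞} (Σ_{k=0}^∞ Φ(e^{-ky}·λ)) / Φ(λ) = 1/(1 - e^{-y/α}). -/
open Filter

set_option maxHeartbeats 2000000

theorem stmt_13 (α y : ℝ) (hα : 1 ≤ α) (hy : 0 < y) (Φ : ℝ → ℝ)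
    (hΦ0 : ∀ lam : ℝ, 0 ≤ lam → 0 ≤ Φ lam)
    (hΦpos : ∀ lam : ℝ, 0 < lam → 0 < Φ lam)
    (hmono : ∀ a b : ℝ, 0 ≤ a → a ≤ b → Φ a ≤ Φ b)
    (K M : ℝ) (hK : 0 < K) (hM : 0 < M)
    (hlin : ∀ lam : ℝ, 0 ≤ lam → lam ≤ M → Φ lam ≤ K * lam)
    (hRV : ∀ t : ℝ, 0 < t →
      Filter.Tendsto (fun lam : ℝ => Φ (t * lam) / Φ lam) Filter.atTop (nhds (t ^ (1 / α)))) :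
    Filter.Tendsto
      (fun lam : ℝ => (∑' k : ℕ, Φ (Real.exp (-k * y) * lam)) / Φ lam)
      Filter.atTop (nhds (1 / (1 - Real.exp (-y / α)))) := by
  have hα0 : (0 : ℝ) < α := lt_of_lt_of_le one_pos hα
  set q := Real.exp (-y / α) with hqdef
  have hq0 : 0 < q := Real.exp_pos _
  have hq1 : q < 1 := by
    rw [hqdef, Real.exp_lt_one_iff]
    exact div_neg_of_neg_of_pos (neg_neg_of_pos hy) hα0
  have hey0 : 0 < Real.exp (-y) := Real.exp_pos _
  have hey1 : Real.exp (-y) < 1 := by rw [Real.exp_lt_one_iff]; linarith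
  have hexp : ∀ k : ℕ, Real.exp (-(k : ℝ) * y) = Real.exp (-y) ^ k := by
    intro k
    rw [← Real.exp_nat_mul]
    congr 1
    ring
  -- per-k limit of ratios
  have hlim : ∀ k : ℕ, Tendsto (fun lam : ℝ => Φ (Real.exp (-(k : ℝ) * y) * lam) / Φ lam)
      atTop (nhds (q ^ k)) := by
    intro k
    have h := hRV (Real.exp (-(k : ℝ) * y)) (Real.exp_pos _)
    have hval : (Real.exp (-(k : ℝ) * y)) ^ (1 / α : ℝ) = q ^ k := by
      rw [Real.rpow_def_of_pos (Real.exp_pos _), Real.log_exp, hqdef, ← Real.exp_nat_mul]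
      congr 1
      field_simp
    rwa [hval] at h
  -- uniform geometric domination for fixed lam
  have hdom : ∀ lam : ℝ, 0 < lam → ∃ C : ℝ, 0 ≤ C ∧
      ∀ k : ℕ, Φ (Real.exp (-(k : ℝ) * y) * lam) ≤ C * Real.exp (-y) ^ k := by
    intro lam hlam
    obtain ⟨j0, hj0⟩ := exists_pow_lt_of_lt_one (div_pos hM hlam) hey1
    refine ⟨max (K * lam) (Φ lam * Real.exp (j0 * y)), le_max_of_le_left (by positivity), ?_⟩
    intro k
    rw [hexp k]
    rcases le_or_gt j0 k with hk | hk
    · have hle : Real.exp (-y) ^ k ≤ Real.exp (-y) ^ j0 :=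
        pow_le_pow_of_le_one hey0.le hey1.le hk
      have h1 : Real.exp (-y) ^ k * lam ≤ M := by
        have h2 : Real.exp (-y) ^ j0 * lam < M := (lt_div_iff₀ hlam).1 hj0
        nlinarith
      calc Φ (Real.exp (-y) ^ k * lam) ≤ K * (Real.exp (-y) ^ k * lam) :=
            hlin _ (by positivity) h1
        _ = (K * lam) * Real.exp (-y) ^ k := by ring
        _ ≤ max (K * lam) (Φ lam * Real.exp (j0 * y)) * Real.exp (-y) ^ k := by
            have := le_max_left (K * lam) (Φ lam * Real.exp (j0 * y))
            nlinarith [pow_nonneg hey0.le k]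
    · have h1 : Real.exp (-y) ^ k * lam ≤ lam := by
        nlinarith [pow_le_one₀ hey0.le hey1.le (n := k)]
      have h2 : Φ (Real.exp (-y) ^ k * lam) ≤ Φ lam := hmono _ _ (by positivity) h1
      have h3 : 1 ≤ Real.exp (j0 * y) * Real.exp (-y) ^ k := by
        rw [← hexp k, ← Real.exp_add]
        refine Real.one_le_exp ?_
        have : (k : ℝ) ≤ (j0 : ℝ) := Nat.cast_le.2 hk.le
        nlinarith
      have h4 : Φ lam ≤ (Φ lam * Real.exp (j0 * y)) * Real.exp (-y) ^ k := by
        nlinarith [hΦ0 lam hlam.le]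
      calc Φ (Real.exp (-y) ^ k * lam) ≤ (Φ lam * Real.exp (j0 * y)) * Real.exp (-y) ^ k := by
            linarith
        _ ≤ max (K * lam) (Φ lam * Real.exp (j0 * y)) * Real.exp (-y) ^ k := by
            have := le_max_right (K * lam) (Φ lam * Real.exp (j0 * y))
            nlinarith [pow_nonneg hey0.le k]
  have hsummable : ∀ lam : ℝ, 0 < lam →
      Summable (fun k : ℕ => Φ (Real.exp (-(k : ℝ) * y) * lam)) := by
    intro lam hlam
    obtain ⟨C, hC0, hC⟩ := hdom lam hlam
    exact Summable.of_nonneg_of_le (fun k => hΦ0 _ (by positivity)) hC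
      ((summable_geometric_of_lt_one hey0.le hey1).mul_left C)
  -- Φ tends to infinity
  have hinf : Tendsto Φ atTop atTop := by
    have h2 : (1 : ℝ) < (2 : ℝ) ^ (1 / α : ℝ) := by
      rw [Real.one_lt_rpow_iff_of_pos (by norm_num)]
      exact Or.inl ⟨by norm_num, by positivity⟩
    set c := (1 + (2 : ℝ) ^ (1 / α : ℝ)) / 2 with hc
    have hc1 : 1 < c := by rw [hc]; linarith
    have hclt : c < (2 : ℝ) ^ (1 / α : ℝ) := by rw [hc]; linarith
    obtain ⟨a0, ha0⟩ := eventually_atTop.1 ((hRV 2 (by norm_num)).eventually_const_lt hclt)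
    set a := max a0 1 with ha
    have ha1 : (1 : ℝ) ≤ a := le_max_right _ _
    have hapos : (0 : ℝ) < a := lt_of_lt_of_le one_pos ha1
    have key : ∀ μ : ℝ, a ≤ μ → c * Φ μ ≤ Φ (2 * μ) := by
      intro μ hμ
      have hμ0 : 0 < μ := lt_of_lt_of_le hapos hμ
      have := ha0 μ (le_trans (le_max_left _ _) hμ)
      have hp := hΦpos μ hμ0
      rw [lt_div_iff₀ hp] at this
      linarith
    have grow : ∀ n : ℕ, c ^ n * Φ a ≤ Φ (2 ^ n * a) := by
      intro n
      induction n with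
      | zero => simp
      | succ n ih =>
        have h1 : a ≤ 2 ^ n * a := by
          nlinarith [one_le_pow₀ (by norm_num : (1:ℝ) ≤ 2) (n := n)]
        have h2 := key (2 ^ n * a) h1
        have h3 : Φ (2 ^ (n + 1) * a) = Φ (2 * (2 ^ n * a)) := by ring_nf
        rw [h3]
        calc c ^ (n + 1) * Φ a = c * (c ^ n * Φ a) := by ring
          _ ≤ c * Φ (2 ^ n * a) := by nlinarith
          _ ≤ Φ (2 * (2 ^ n * a)) := h2
    rw [tendsto_atTop]
    intro b
    have hca : Tendsto (fun n : ℕ => c ^ n * Φ a) atTop atTop :=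
      (tendsto_pow_atTop_atTop_of_one_lt hc1).atTop_mul_const (hΦpos a hapos)
    obtain ⟨n, hn⟩ := (hca.eventually_ge_atTop b).exists
    filter_upwards [eventually_ge_atTop ((2 : ℝ) ^ n * a)] with lam hlam
    have := hmono (2 ^ n * a) lam (by positivity) hlam
    linarith [grow n]
  -- choose r and Λ
  set r := (q + 1) / 2 with hrdef
  have hqr : q < r := by rw [hrdef]; linarith
  have hr1 : r < 1 := by rw [hrdef]; linarith
  have hr0 : 0 < r := by rw [hrdef]; linarith
  have hstepEv : ∀ᶠ lam in atTop, Φ (Real.exp (-y) * lam) / Φ lam < r := by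
    have h := hRV (Real.exp (-y)) (Real.exp_pos _)
    have hval : (Real.exp (-y)) ^ (1 / α : ℝ) = q := by
      rw [Real.rpow_def_of_pos (Real.exp_pos _), Real.log_exp, hqdef]
      congr 1
      field_simp
    rw [hval] at h
    exact h.eventually_lt_const hqr
  obtain ⟨Λ0, hΛ0⟩ := eventually_atTop.1 hstepEv
  set Λ := max Λ0 1 with hΛdef
  have hΛ1 : (1 : ℝ) ≤ Λ := le_max_right _ _
  have hΛpos : (0 : ℝ) < Λ := lt_of_lt_of_le one_pos hΛ1
  have hstep : ∀ μ : ℝ, Λ ≤ μ → Φ (Real.exp (-y) * μ) ≤ r * Φ μ := by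
    intro μ hμ
    have hμ0 : 0 < μ := lt_of_lt_of_le hΛpos hμ
    have h := hΛ0 μ (le_trans (le_max_left _ _) hμ)
    have hp := hΦpos μ hμ0
    rw [div_lt_iff₀ hp] at h
    linarith
  -- the fixed comparison sequence g
  set g := fun j : ℕ => Φ (Real.exp (-(j : ℝ) * y) * Λ) with hgdef
  have hgsum : Summable g := hsummable Λ hΛpos
  have hg0 : ∀ j, 0 ≤ g j := fun j => hΦ0 _ (by positivity)
  set H := ∑' j : ℕ, g j with hHdef
  have hH0 : 0 ≤ H := tsum_nonneg hg0
  -- main epsilon argument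
  rw [Metric.tendsto_nhds]
  intro ε hε
  -- choose N
  have hrN : Tendsto (fun n : ℕ => r ^ n * (1 - r)⁻¹) atTop (nhds 0) := by
    have := (tendsto_pow_atTop_nhds_zero_of_lt_one hr0.le hr1).mul_const (1 - r)⁻¹
    simpa using this
  obtain ⟨N, hN⟩ := (hrN.eventually_lt_const (by positivity : (0:ℝ) < ε / 5)).exists
  -- eventual conditions
  have hfin : Tendsto (fun lam : ℝ => ∑ k ∈ Finset.range N,
      Φ (Real.exp (-(k : ℝ) * y) * lam) / Φ lam) atTop
      (nhds (∑ k ∈ Finset.range N, q ^ k)) :=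
    tendsto_finset_sum _ (fun k _ => hlim k)
  have E2 := Metric.tendsto_nhds.1 hfin (ε / 5) (by positivity)
  have E3 := hinf.eventually_ge_atTop (5 / ε * H + 1)
  filter_upwards [eventually_ge_atTop Λ, E2, E3] with lam h1 h2 h3
  have hlam1 : (1 : ℝ) ≤ lam := le_trans hΛ1 h1
  have hlam0 : (0 : ℝ) < lam := lt_of_lt_of_le one_pos hlam1
  have hΦl : 0 < Φ lam := hΦpos lam hlam0
  set f := fun k : ℕ => Φ (Real.exp (-(k : ℝ) * y) * lam) with hfdef
  have hsum : Summable f := hsummable lam hlam0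
  -- k1
  have hex : ∃ k : ℕ, Real.exp (-(k : ℝ) * y) * lam < Λ := by
    obtain ⟨n, hn⟩ := exists_pow_lt_of_lt_one (div_pos hΛpos hlam0) hey1
    exact ⟨n, by rw [hexp n]; exact (lt_div_iff₀ hlam0).1 hn⟩
  set k1 := Nat.find hex with hk1def
  have hk1lt : Real.exp (-(k1 : ℝ) * y) * lam < Λ := Nat.find_spec hex
  have hk1min : ∀ j, j < k1 → Λ ≤ Real.exp (-(j : ℝ) * y) * lam :=
    fun j hj => not_lt.1 (Nat.find_min hex hj)
  -- chain bound
  have hchain : ∀ k : ℕ, k ≤ k1 → f k ≤ r ^ k * Φ lam := by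
    intro k
    induction k with
    | zero => intro _; simp [hfdef]
    | succ n ih =>
      intro hn1
      have hn : n < k1 := Nat.lt_of_succ_le hn1
      have hs := hstep _ (hk1min n hn)
      have heq : Real.exp (-((n + 1 : ℕ) : ℝ) * y) * lam
          = Real.exp (-y) * (Real.exp (-(n : ℝ) * y) * lam) := by
        rw [← mul_assoc, ← Real.exp_add]
        congr 2
        push_cast
        ring
      have ihn := ih hn.le
      calc f (n + 1) = Φ (Real.exp (-y) * (Real.exp (-(n : ℝ) * y) * lam)) := by
            simp only [hfdef]; rw [heq]
        _ ≤ r * Φ (Real.exp (-(n : ℝ) * y) * lam) := hs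
        _ = r * f n := by simp only [hfdef]
        _ ≤ r * (r ^ n * Φ lam) := mul_le_mul_of_nonneg_left ihn hr0.le
        _ = r ^ (n + 1) * Φ lam := by ring
  -- per term bound
  set g' := fun k : ℕ => if k1 ≤ k then g (k - k1) else 0 with hg'def
  have hg'0 : ∀ k, 0 ≤ g' k := by
    intro k
    rw [hg'def]
    by_cases hk : k1 ≤ k
    · simp only [if_pos hk]; exact hg0 _
    · simp only [if_neg hk]; exact le_refl 0
  have hterm : ∀ k : ℕ, f k ≤ r ^ k * Φ lam + g' k := by
    intro k
    rcases lt_or_ge k k1 with hk | hk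
    · have := hchain k hk.le
      have h0 := hg'0 k
      linarith
    · have heq : Real.exp (-(k : ℝ) * y) * lam
          = Real.exp (-((k - k1 : ℕ) : ℝ) * y) * (Real.exp (-(k1 : ℝ) * y) * lam) := by
        rw [← mul_assoc, ← Real.exp_add]
        congr 2
        rw [Nat.cast_sub hk]
        ring
      have hb : f k ≤ g (k - k1) := by
        simp only [hfdef, hgdef]
        rw [heq]
        exact hmono _ _ (by positivity)
          (mul_le_mul_of_nonneg_left hk1lt.le (Real.exp_pos _).le)
      have : g' k = g (k - k1) := if_pos hk
      have hrk : (0:ℝ) ≤ r ^ k * Φ lam := by positivity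
      linarith
  -- summabilities
  have hg'sum : Summable g' := by
    refine (summable_nat_add_iff k1).1 ?_
    have hfun : (fun n : ℕ => g' (n + k1)) = g := by
      funext n
      rw [hg'def]
      simp [Nat.le_add_left]
    rw [hfun]
    exact hgsum
  have hrsum : Summable (fun k : ℕ => r ^ k * Φ lam) :=
    (summable_geometric_of_lt_one hr0.le hr1).mul_right _
  have hbsum : Summable (fun k : ℕ => r ^ k * Φ lam + g' k) := hrsum.add hg'sum
  -- tail bound
  have hsplit := Summable.sum_add_tsum_nat_add N hsum
  set T := ∑' i : ℕ, f (i + N) with hTdef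
  have hT0 : 0 ≤ T := tsum_nonneg (fun i => hΦ0 _ (by positivity))
  have hTle : T ≤ r ^ N * (1 - r)⁻¹ * Φ lam + H := by
    have hb1 : T ≤ ∑' i : ℕ, (r ^ (i + N) * Φ lam + g' (i + N)) :=
      Summable.tsum_le_tsum (fun i => hterm (i + N)) ((summable_nat_add_iff N).2 hsum)
        ((summable_nat_add_iff N).2 hbsum)
    have hb2 : (∑' i : ℕ, (r ^ (i + N) * Φ lam + g' (i + N)))
        = (∑' i : ℕ, r ^ (i + N) * Φ lam) + ∑' i : ℕ, g' (i + N) :=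
      Summable.tsum_add ((summable_nat_add_iff N).2 hrsum) ((summable_nat_add_iff N).2 hg'sum)
    have hb3 : (∑' i : ℕ, r ^ (i + N) * Φ lam) = (1 - r)⁻¹ * (r ^ N * Φ lam) := by
      have hfun : (fun i : ℕ => r ^ (i + N) * Φ lam)
          = fun i : ℕ => r ^ i * (r ^ N * Φ lam) := by
        funext i; rw [pow_add]; ring
      rw [hfun, tsum_mul_right, tsum_geometric_of_lt_one hr0.le hr1]
    have hb4 : (∑' i : ℕ, g' (i + N)) ≤ H := by
      have h5 := Summable.sum_add_tsum_nat_add N hg'sum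
      have h6 : (∑' k : ℕ, g' k) = H := by
        have h7 := Summable.sum_add_tsum_nat_add k1 hg'sum
        have h8 : ∑ i ∈ Finset.range k1, g' i = 0 :=
          Finset.sum_eq_zero fun i hi => by
            rw [hg'def]; simp [Nat.not_le.2 (Finset.mem_range.1 hi)]
        have h9 : (fun n : ℕ => g' (n + k1)) = g := by
          funext n
          rw [hg'def]
          simp [Nat.le_add_left]
        rw [← h7, h8, h9, zero_add, hHdef]
      have h10 : 0 ≤ ∑ i ∈ Finset.range N, g' i := Finset.sum_nonneg fun i _ => hg'0 i
      linarith
    have hb5 : (1 - r)⁻¹ * (r ^ N * Φ lam) = r ^ N * (1 - r)⁻¹ * Φ lam := by ring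
    linarith [hb1, hb2.le, hb3.le]
  -- assembling
  set P := ∑ k ∈ Finset.range N, f k with hPdef
  set Pq := ∑ k ∈ Finset.range N, q ^ k with hPqdef
  have hqsum : Summable (fun k : ℕ => q ^ k) := summable_geometric_of_lt_one hq0.le hq1
  have hLsplit : 1 / (1 - q) = Pq + ∑' i : ℕ, q ^ (i + N) := by
    have := Summable.sum_add_tsum_nat_add N hqsum
    rw [tsum_geometric_of_lt_one hq0.le hq1] at this
    rw [one_div, ← this]
  set Cq := ∑' i : ℕ, q ^ (i + N) with hCqdef
  have hCq0 : 0 ≤ Cq := tsum_nonneg fun i => by positivity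
  have hCqle : Cq ≤ ε / 5 := by
    have hfun : (fun i : ℕ => q ^ (i + N)) = fun i : ℕ => q ^ i * q ^ N := by
      funext i; rw [pow_add]
    have hval : Cq = (1 - q)⁻¹ * q ^ N := by
      rw [hCqdef, hfun, tsum_mul_right, tsum_geometric_of_lt_one hq0.le hq1, mul_comm]
    have hle1 : q ^ N ≤ r ^ N := pow_le_pow_left₀ hq0.le hqr.le N
    have hle2 : (1 - q)⁻¹ ≤ (1 - r)⁻¹ := by
      apply inv_anti₀ (by linarith) (by linarith)
    have hrNpos : (0:ℝ) ≤ r ^ N := by positivity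
    have hinvq : (0:ℝ) ≤ (1 - q)⁻¹ := inv_nonneg.2 (by linarith)
    calc Cq = (1 - q)⁻¹ * q ^ N := hval
      _ ≤ (1 - r)⁻¹ * r ^ N := by nlinarith [pow_nonneg hq0.le N]
      _ = r ^ N * (1 - r)⁻¹ := by ring
      _ ≤ ε / 5 := hN.le
  have hHle : H ≤ ε / 5 * Φ lam := by
    have hmul := mul_le_mul_of_nonneg_left h3 (by positivity : (0:ℝ) ≤ ε / 5)
    have hexpand : ε / 5 * (5 / ε * H + 1) = H + ε / 5 := by
      field_simp
    rw [hexpand] at hmul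
    linarith
  -- final bound
  have hSsplit : (∑' k : ℕ, f k) = P + T := by rw [← hsplit]
  have hA : |P / Φ lam - Pq| < ε / 5 := by
    have : P / Φ lam = ∑ k ∈ Finset.range N, f k / Φ lam := Finset.sum_div _ _ _
    rw [this]
    have := h2
    rw [Real.dist_eq] at this
    exact this
  have hB1 : T / Φ lam ≤ r ^ N * (1 - r)⁻¹ + H / Φ lam := by
    have h := (div_le_div_iff_of_pos_right hΦl).2 hTle
    rw [add_div, mul_div_assoc, div_self hΦl.ne', mul_one] at h
    exact h
  have hB2 : T / Φ lam ≤ ε / 5 + ε / 5 := by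
    have hH2 : H / Φ lam ≤ ε / 5 := (div_le_iff₀ hΦl).2 (by linarith)
    linarith [hN.le]
  have hB0 : 0 ≤ T / Φ lam := div_nonneg hT0 hΦl.le
  have hgoal : (∑' k : ℕ, Φ (Real.exp (-(k : ℝ) * y) * lam)) / Φ lam = P / Φ lam + T / Φ lam := by
    rw [show (∑' k : ℕ, Φ (Real.exp (-(k : ℝ) * y) * lam)) = ∑' k : ℕ, f k from rfl,
      hSsplit, add_div]
  rw [Real.dist_eq, hgoal, hLsplit]
  obtain ⟨hA1, hA2⟩ := abs_lt.1 hA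
  rw [abs_lt]
  constructor <;> linarith
end

section
/- Let κ > 0 and α > 0. Let L : (0,∞) → (0,∞) be nondecreasing and regularly varying of index α at 0, i.e., for every u > 0, L(ux)/L(x) → u^α as x → 0⁺. Let f : (0,∞) → [0,∞) be Lebesgue integrable with f(y)/L(y) → 1 as y → 0⁺. Then lim_{x → 0⁺} (x^{-(κ+1)}·∫₀^∞ e^{-y/x}·y^κ·f(y) dy) / L(x) = Γ(α+κ+1). -/
/-!
Substituting `y = x u` turns the quotient into `∫₀^∞ e^{-u} u^κ f(x u) / L(x) du`. Fix `T > 0`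
with `f ≤ 2 L` and `L(2t) ≤ 2^{α+1} L(t)` on `(0, T)`; the latter is possible because
`L(2t)/L(t) → 2^α`. Iterating the doubling bound gives the Potter-type estimate
`L(x u) ≤ 2^{α+1} (1 + u^{α+1}) L(x)` for `x u < T`, so on `{x u < T}` the integrand is dominated
by a Gamma-type integrable function and tends pointwise to `e^{-u} u^{α+κ}`: dominated
convergence gives `Γ(α+κ+1)`. On `{x u ≥ T}` the kernel is `O(e^{-T/(2x)})`, while the same
estimate gives `L(x) ≥ c x^{α+1}`, so that part tends to `0`.
-/

open MeasureTheory Filter Set Real Topology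

lemma exp_neg_mul_rpow_le {κ c u : ℝ} (hκ : 0 < κ) (hc : c < 1) (hu : 0 ≤ u) :
    exp (-u) * u ^ κ ≤ (κ / (1 - c)) ^ κ * exp (-(c * u)) := by
  have hc' : 0 < 1 - c := sub_pos.2 hc
  have hv : (1 - c) * u / κ ≤ exp ((1 - c) * u / κ) := by
    linarith [add_one_le_exp ((1 - c) * u / κ), show 0 ≤ (1 - c) * u / κ by positivity]
  have hpow : u ^ κ ≤ (κ / (1 - c)) ^ κ * exp ((1 - c) * u) :=
    calc u ^ κ = (κ / (1 - c)) ^ κ * ((1 - c) * u / κ) ^ κ := by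
          rw [← mul_rpow (by positivity) (by positivity)]; congr 1; field_simp
      _ ≤ (κ / (1 - c)) ^ κ * exp ((1 - c) * u / κ) ^ κ := by gcongr
      _ = (κ / (1 - c)) ^ κ * exp ((1 - c) * u) := by rw [← exp_mul]; congr 2; field_simp
  calc exp (-u) * u ^ κ ≤ exp (-u) * ((κ / (1 - c)) ^ κ * exp ((1 - c) * u)) := by gcongr
    _ = (κ / (1 - c)) ^ κ * exp (-(c * u)) := by
      rw [mul_left_comm, ← exp_add]; ring_nf

lemma tendsto_rpow_neg_mul_exp_neg_div_nhdsGT_zero (s : ℝ) {b : ℝ} (hb : 0 < b) :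
    Tendsto (fun x : ℝ => x ^ (-s) * exp (-b / x)) (𝓝[>] 0) (𝓝 0) := by
  refine ((tendsto_rpow_mul_exp_neg_mul_atTop_nhds_zero s b hb).comp
    tendsto_inv_nhdsGT_zero).congr' ?_
  filter_upwards [self_mem_nhdsWithin] with x hx
  simp [rpow_neg hx.le, inv_rpow hx.le, div_eq_mul_inv]

section Potter

variable {L : ℝ → ℝ} {β T : ℝ}

lemma le_mul_rpow_mul_of_doubling (hL : ∀ x, 0 < x → 0 ≤ L x) (hmono : MonotoneOn L (Ioi 0))
    (hβ : 0 ≤ β) (hdouble : ∀ t ∈ Ioo 0 T, L (2 * t) ≤ 2 ^ β * L t) {x u : ℝ} (hx : 0 < x)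
    (hu : 1 ≤ u) (hxu : x * u < T) : L (x * u) ≤ 2 ^ β * u ^ β * L x := by
  -- induction on `n` with `u < 2 ^ n`: halve `u` and apply the doubling bound once
  obtain ⟨n, hn⟩ := pow_unbounded_of_one_lt u one_lt_two
  induction n generalizing u with
  | zero => simp only [pow_zero] at hn; linarith
  | succ n ih =>
    rcases le_or_gt u 2 with hu2 | hu2
    · calc L (x * u) ≤ L (2 * x) :=
            hmono (mul_pos hx (by linarith)) (mul_pos two_pos hx) (by nlinarith)
        _ ≤ 2 ^ β * L x := hdouble x ⟨hx, by nlinarith⟩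
        _ ≤ 2 ^ β * u ^ β * L x := by
          have := hL x hx
          gcongr
          exact le_mul_of_one_le_right (by positivity) (one_le_rpow hu hβ)
    · have hxu2 : x * (u / 2) < T := by nlinarith
      calc L (x * u) = L (2 * (x * (u / 2))) := by ring_nf
        _ ≤ 2 ^ β * L (x * (u / 2)) := hdouble _ ⟨by positivity, hxu2⟩
        _ ≤ 2 ^ β * (2 ^ β * (u / 2) ^ β * L x) := by
          gcongr
          exact ih (by linarith) hxu2 (by rw [pow_succ] at hn; linarith)
        _ = 2 ^ β * u ^ β * L x := by
          rw [div_rpow (by linarith) zero_le_two]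
          field_simp

lemma le_one_add_rpow_mul_of_doubling (hL : ∀ x, 0 < x → 0 ≤ L x)
    (hmono : MonotoneOn L (Ioi 0)) (hβ : 0 ≤ β) (hdouble : ∀ t ∈ Ioo 0 T, L (2 * t) ≤ 2 ^ β * L t)
    {x u : ℝ} (hx : 0 < x) (hu : 0 < u) (hxu : x * u < T) :
    L (x * u) ≤ 2 ^ β * (1 + u ^ β) * L x := by
  have hLx := hL x hx
  have h2β : 1 ≤ (2 : ℝ) ^ β := one_le_rpow one_le_two hβ
  rcases le_or_gt 1 u with hu1 | hu1
  · calc L (x * u) ≤ 2 ^ β * u ^ β * L x :=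
          le_mul_rpow_mul_of_doubling hL hmono hβ hdouble hx hu1 hxu
      _ ≤ 2 ^ β * (1 + u ^ β) * L x := by gcongr; linarith
  · calc L (x * u) ≤ L x := hmono (mul_pos hx hu) hx (by nlinarith)
      _ ≤ 2 ^ β * (1 + u ^ β) * L x := by
        refine le_mul_of_one_le_left hLx ?_
        nlinarith [rpow_nonneg hu.le β]

lemma div_rpow_mul_rpow_le_of_doubling (hL : ∀ x, 0 < x → 0 ≤ L x)
    (hmono : MonotoneOn L (Ioi 0)) (hβ : 0 ≤ β) (hdouble : ∀ t ∈ Ioo 0 T, L (2 * t) ≤ 2 ^ β * L t)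
    {x : ℝ} (hx : 0 < x) (hxT : x ≤ T / 2) : L (T / 2) / T ^ β * x ^ β ≤ L x := by
  have hT : 0 < T := by linarith
  have key := le_mul_rpow_mul_of_doubling hL hmono hβ hdouble hx (u := T / (2 * x))
    (by rw [le_div_iff₀ (by positivity)]; linarith) (by field_simp; linarith)
  rw [show x * (T / (2 * x)) = T / 2 by field_simp, ← mul_rpow zero_le_two (by positivity),
    show 2 * (T / (2 * x)) = T / x by field_simp, div_rpow hT.le hx.le] at key
  rw [div_mul_eq_mul_div, div_le_iff₀ (by positivity)]
  calc L (T / 2) * x ^ β ≤ T ^ β / x ^ β * L x * x ^ β := by gcongr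
    _ = L x * T ^ β := by field_simp

end Potter

noncomputable def gammaKernelIntegral (κ : ℝ) (g : ℝ → ℝ) (x : ℝ) : ℝ :=
  ∫ u in Ioi 0, exp (-u) * u ^ κ * g (x * u)

lemma rpow_mul_integral_exp_neg_div_eq_gammaKernelIntegral (κ : ℝ) (g : ℝ → ℝ) {x : ℝ}
    (hx : 0 < x) :
    x ^ (-(κ + 1)) * ∫ y in Ioi 0, exp (-y / x) * y ^ κ * g y = gammaKernelIntegral κ g x := by
  have hsub := integral_comp_mul_left_Ioi' (fun y => exp (-y / x) * y ^ κ * g y) 0 hx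
  rw [mul_zero] at hsub
  rw [← hsub, smul_eq_mul, ← mul_assoc, gammaKernelIntegral, ← integral_const_mul]
  refine setIntegral_congr_fun measurableSet_Ioi fun u (hu : 0 < u) => ?_
  have hxκ : x ^ (-(κ + 1)) * x * x ^ κ = 1 := by
    rw [rpow_neg hx.le, rpow_add_one hx.ne']; field_simp
  rw [neg_div, mul_div_cancel_left₀ u hx.ne', mul_rpow hx.le hu.le]
  linear_combination (exp (-u) * u ^ κ * g (x * u)) * hxκ

lemma integrableOn_exp_neg_mul_rpow_mul_comp_mul {κ : ℝ} (hκ : 0 < κ) {g : ℝ → ℝ}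
    (hg : IntegrableOn g (Ioi 0)) {x : ℝ} (hx : 0 < x) :
    IntegrableOn (fun u => exp (-u) * u ^ κ * g (x * u)) (Ioi 0) := by
  have hgx : IntegrableOn (fun u => g (x * u)) (Ioi 0) :=
    (integrableOn_Ioi_comp_mul_left_iff g 0 hx).2 (by rwa [mul_zero])
  refine hgx.bdd_mul (c := κ ^ κ)
    ((continuous_exp.comp continuous_neg).mul (continuous_rpow_const hκ.le)).aestronglyMeasurable ?_
  rw [ae_restrict_iff' measurableSet_Ioi]
  filter_upwards with u (hu : 0 < u)
  rw [norm_of_nonneg (by positivity)]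
  simpa using exp_neg_mul_rpow_le (c := 0) hκ zero_lt_one hu.le

lemma gammaKernelIntegral_indicator_Iio_add_indicator_Ici {κ : ℝ} (hκ : 0 < κ) {g : ℝ → ℝ}
    (hg : IntegrableOn g (Ioi 0)) (T : ℝ) {x : ℝ} (hx : 0 < x) :
    gammaKernelIntegral κ ((Iio T).indicator g) x + gammaKernelIntegral κ ((Ici T).indicator g) x
      = gammaKernelIntegral κ g x := by
  rw [gammaKernelIntegral, gammaKernelIntegral, ← integral_add
    (integrableOn_exp_neg_mul_rpow_mul_comp_mul hκ (hg.indicator measurableSet_Iio) hx)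
    (integrableOn_exp_neg_mul_rpow_mul_comp_mul hκ (hg.indicator measurableSet_Ici) hx)]
  simp only [← mul_add, ← compl_Iio, indicator_self_add_compl_apply, gammaKernelIntegral]

section KernelLimits

variable {κ α β T : ℝ} {L f : ℝ → ℝ}

theorem tendsto_gammaKernelIntegral_indicator_Iio_div (hκ : 0 < κ) (hα : 0 ≤ α) (hβ : 0 ≤ β)
    (hT : 0 < T) (hLpos : ∀ x, 0 < x → 0 < L x) (hmono : MonotoneOn L (Ioi 0))
    (hLRV : ∀ u, 0 < u → Tendsto (fun x => L (u * x) / L x) (𝓝[>] 0) (𝓝 (u ^ α)))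
    (hf0 : ∀ y, 0 ≤ f y) (hfint : IntegrableOn f (Ioi 0))
    (hfL : Tendsto (fun y => f y / L y) (𝓝[>] 0) (𝓝 1))
    (hfT : ∀ t ∈ Ioo 0 T, f t ≤ 2 * L t) (hdouble : ∀ t ∈ Ioo 0 T, L (2 * t) ≤ 2 ^ β * L t) :
    Tendsto (fun x => gammaKernelIntegral κ ((Iio T).indicator f) x / L x) (𝓝[>] 0)
      (𝓝 (Gamma (α + κ + 1))) := by
  have hGamma : Gamma (α + κ + 1) = ∫ u in Ioi 0, exp (-u) * u ^ κ * u ^ α := by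
    rw [Gamma_eq_integral (by positivity)]
    refine setIntegral_congr_fun measurableSet_Ioi fun u (hu : 0 < u) => ?_
    rw [mul_assoc, ← rpow_add hu]
    ring_nf
  simp only [gammaKernelIntegral, ← integral_div]
  rw [hGamma]
  refine tendsto_integral_filter_of_dominated_convergence
    (fun u => 2 * 2 ^ β * (exp (-u) * u ^ κ + exp (-u) * u ^ (κ + β))) ?_ ?_ ?_ ?_
  · filter_upwards [self_mem_nhdsWithin] with x (hx : 0 < x)
    exact ((integrableOn_exp_neg_mul_rpow_mul_comp_mul hκ
      (hfint.indicator measurableSet_Iio) hx).div_const _).aestronglyMeasurable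
  · filter_upwards [self_mem_nhdsWithin] with x (hx : 0 < x)
    rw [ae_restrict_iff' measurableSet_Ioi]
    filter_upwards with u (hu : 0 < u)
    have hLx := hLpos x hx
    have := indicator_nonneg (s := Iio T) (fun y _ => hf0 y) (x * u)
    rw [norm_of_nonneg (by positivity)]
    by_cases hxu : x * u < T
    · rw [indicator_of_mem (show x * u ∈ Iio T from hxu), div_le_iff₀ hLx]
      calc exp (-u) * u ^ κ * f (x * u)
          ≤ exp (-u) * u ^ κ * (2 * (2 ^ β * (1 + u ^ β) * L x)) := by
            gcongr
            exact (hfT _ ⟨mul_pos hx hu, hxu⟩).trans (by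
              gcongr; exact le_one_add_rpow_mul_of_doubling (fun x hx => (hLpos x hx).le)
                hmono hβ hdouble hx hu hxu)
        _ = 2 * 2 ^ β * (exp (-u) * u ^ κ + exp (-u) * u ^ (κ + β)) * L x := by
            rw [rpow_add hu]; ring
    · rw [indicator_of_notMem (show x * u ∉ Iio T from hxu), mul_zero, zero_div]
      positivity
  · have hΓ (s : ℝ) (hs : 0 ≤ s) : IntegrableOn (fun u => exp (-u) * u ^ s) (Ioi 0) := by
      simpa using GammaIntegral_convergent (s := s + 1) (by positivity)
    exact ((hΓ κ hκ.le).add (hΓ (κ + β) (by positivity))).const_mul _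
  · rw [ae_restrict_iff' measurableSet_Ioi]
    filter_upwards with u (hu : 0 < u)
    have hscale : Tendsto (fun x => f (u * x) / L (u * x)) (𝓝[>] 0) (𝓝 1) :=
      hfL.comp (tendsto_comap.mono_left (comap_mulLeft_nhdsGT_zero hu).ge)
    have hlim := (hscale.mul (hLRV u hu)).const_mul (exp (-u) * u ^ κ)
    rw [one_mul] at hlim
    refine hlim.congr' ?_
    filter_upwards [Ioo_mem_nhdsGT (div_pos hT hu)] with x ⟨hx, hxT⟩
    have hxu : x * u ∈ Iio T := (lt_div_iff₀ hu).1 hxT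
    have hLux := (hLpos (u * x) (mul_pos hu hx)).ne'
    rw [indicator_of_mem hxu, mul_comm x u]
    field_simp

theorem tendsto_gammaKernelIntegral_indicator_Ici_div {c : ℝ} (hκ : 0 < κ) (hT : 0 < T)
    (hc : 0 < c) (hLlow : ∀ᶠ x in 𝓝[>] 0, c * x ^ β ≤ L x) (hf0 : ∀ y, 0 ≤ f y)
    (hfint : IntegrableOn f (Ioi 0)) :
    Tendsto (fun x => gammaKernelIntegral κ ((Ici T).indicator f) x / L x) (𝓝[>] 0) (𝓝 0) := by
  set K := (κ / (1 - 1 / 2)) ^ κ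
  set I := ∫ y in Ioi 0, f y
  have hI : 0 ≤ I := setIntegral_nonneg measurableSet_Ioi fun y _ => hf0 y
  have hkernel (x : ℝ) (hx : 0 < x) :
      gammaKernelIntegral κ ((Ici T).indicator f) x ≤ K * exp (-(T / 2) / x) * (x⁻¹ * I) := by
    have hfx : IntegrableOn (fun u => f (x * u)) (Ioi 0) :=
      (integrableOn_Ioi_comp_mul_left_iff f 0 hx).2 (by rwa [mul_zero])
    calc gammaKernelIntegral κ ((Ici T).indicator f) x
        ≤ ∫ u in Ioi 0, K * exp (-(T / 2) / x) * f (x * u) := by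
          refine setIntegral_mono_on (integrableOn_exp_neg_mul_rpow_mul_comp_mul hκ
            (hfint.indicator measurableSet_Ici) hx) (hfx.const_mul _) measurableSet_Ioi
            fun u (hu : 0 < u) => ?_
          by_cases hxu : T ≤ x * u
          · rw [indicator_of_mem (show x * u ∈ Ici T from hxu)]
            refine mul_le_mul_of_nonneg_right ?_ (hf0 _)
            calc exp (-u) * u ^ κ ≤ K * exp (-(1 / 2 * u)) :=
                  exp_neg_mul_rpow_le hκ (by norm_num) hu.le
              _ ≤ K * exp (-(T / 2) / x) := by
                gcongr
                rw [neg_div, neg_le_neg_iff, div_le_iff₀ hx]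
                linarith
          · rw [indicator_of_notMem (show x * u ∉ Ici T from hxu), mul_zero]
            have := hf0 (x * u)
            positivity
      _ = K * exp (-(T / 2) / x) * (x⁻¹ * I) := by
        rw [integral_const_mul, integral_comp_mul_left_Ioi f 0 hx, mul_zero, smul_eq_mul]
  have hbound : ∀ᶠ x in 𝓝[>] 0, gammaKernelIntegral κ ((Ici T).indicator f) x / L x
      ≤ K * I / c * (x ^ (-(β + 1)) * exp (-(T / 2) / x)) := by
    filter_upwards [self_mem_nhdsWithin, hLlow] with x (hx : 0 < x) hLx
    calc gammaKernelIntegral κ ((Ici T).indicator f) x / L x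
        ≤ K * exp (-(T / 2) / x) * (x⁻¹ * I) / (c * x ^ β) := by
          gcongr
          exact hkernel x hx
      _ = K * I / c * (x ^ (-(β + 1)) * exp (-(T / 2) / x)) := by
          rw [rpow_neg hx.le, rpow_add_one hx.ne']
          field_simp
  have hnonneg : ∀ᶠ x in 𝓝[>] 0, 0 ≤ gammaKernelIntegral κ ((Ici T).indicator f) x / L x := by
    filter_upwards [self_mem_nhdsWithin, hLlow] with x (hx : 0 < x) hLx
    have hint : 0 ≤ gammaKernelIntegral κ ((Ici T).indicator f) x :=
      setIntegral_nonneg measurableSet_Ioi fun u (hu : 0 < u) => by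
        have := indicator_nonneg (s := Ici T) (fun y _ => hf0 y) (x * u)
        positivity
    exact div_nonneg hint ((by positivity : 0 ≤ c * x ^ β).trans hLx)
  have hdecay := (tendsto_rpow_neg_mul_exp_neg_div_nhdsGT_zero (β + 1) (half_pos hT)).const_mul
    (K * I / c)
  rw [mul_zero] at hdecay
  exact tendsto_of_tendsto_of_tendsto_of_le_of_le' tendsto_const_nhds hdecay hnonneg hbound

end KernelLimits

theorem stmt_15 (κ α : ℝ) (hκ : 0 < κ) (hα : 0 < α) (L : ℝ → ℝ)
    (hLpos : ∀ x : ℝ, 0 < x → 0 < L x)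
    (hLmono : ∀ a b : ℝ, 0 < a → a ≤ b → L a ≤ L b)
    (hLRV : ∀ u : ℝ, 0 < u →
      Filter.Tendsto (fun x : ℝ => L (u * x) / L x) (nhdsWithin 0 (Set.Ioi 0)) (nhds (u ^ α)))
    (f : ℝ → ℝ) (hf0 : ∀ y : ℝ, 0 ≤ f y)
    (hfint : MeasureTheory.IntegrableOn f (Set.Ioi 0))
    (hfL : Filter.Tendsto (fun y : ℝ => f y / L y) (nhdsWithin 0 (Set.Ioi 0)) (nhds 1)) :
    Filter.Tendsto
      (fun x : ℝ =>
        (x ^ (-(κ + 1)) * ∫ y in Set.Ioi (0:ℝ), Real.exp (-y / x) * y ^ κ * f y) / L x)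
      (nhdsWithin 0 (Set.Ioi 0)) (nhds (Real.Gamma (α + κ + 1))) := by
  have hmono : MonotoneOn L (Ioi 0) := fun a ha _ _ hab => hLmono a _ ha hab
  have hL0 : ∀ x, 0 < x → 0 ≤ L x := fun x hx => (hLpos x hx).le
  obtain ⟨T, hT, hTsub⟩ :
      ∃ T > 0, Ioo 0 T ⊆ {t | f t / L t < 2 ∧ L (2 * t) / L t < 2 ^ (α + 1)} :=
    mem_nhdsGT_iff_exists_Ioo_subset.1 ((hfL.eventually_lt_const one_lt_two).and
      ((hLRV 2 two_pos).eventually_lt_const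
        (rpow_lt_rpow_of_exponent_lt one_lt_two (lt_add_one α))))
  have hfT : ∀ t ∈ Ioo 0 T, f t ≤ 2 * L t :=
    fun t ht => ((div_lt_iff₀ (hLpos t ht.1)).1 (hTsub ht).1).le
  have hdouble : ∀ t ∈ Ioo 0 T, L (2 * t) ≤ 2 ^ (α + 1) * L t :=
    fun t ht => ((div_lt_iff₀ (hLpos t ht.1)).1 (hTsub ht).2).le
  have hLlow : ∀ᶠ x in 𝓝[>] 0, L (T / 2) / T ^ (α + 1) * x ^ (α + 1) ≤ L x := by
    filter_upwards [Ioo_mem_nhdsGT (half_pos hT)] with x hx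
    exact div_rpow_mul_rpow_le_of_doubling hL0 hmono (by positivity) hdouble hx.1 hx.2.le
  have hnear := tendsto_gammaKernelIntegral_indicator_Iio_div hκ hα.le (by positivity) hT hLpos
    hmono hLRV hf0 hfint hfL hfT hdouble
  have htail := tendsto_gammaKernelIntegral_indicator_Ici_div hκ hT
    (div_pos (hLpos _ (half_pos hT)) (rpow_pos_of_pos hT _)) hLlow hf0 hfint
  rw [← add_zero (Gamma _)]
  refine (hnear.add htail).congr' ?_
  filter_upwards [self_mem_nhdsWithin] with x (hx : 0 < x)
  rw [rpow_mul_integral_exp_neg_div_eq_gammaKernelIntegral κ f hx, ← add_div,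
    gammaKernelIntegral_indicator_Iio_add_indicator_Ici hκ hfint T hx]
end

section
/- Let f, g : ℝ → ℂ be infinitely differentiable functions such that f(x) ≠ 0 for all x, f′ = g·f, and for every integer n ≥ 0 the n-th derivative of g tends to 0 as |x| → ∞. Then for every integer n ≥ 1, f^{(n)}(x)/f(x) → 0 as |x| → ∞. -/
open Filter Finset

private lemma diffIter {f : ℝ → ℂ} (hf : ContDiff ℝ (⊤ : ℕ∞) f) (k : ℕ) :
    Differentiable ℝ (iteratedDeriv k f) :=
  hf.differentiable_iteratedDeriv k (by exact_mod_cast ENat.coe_lt_top k)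

private lemma hasDerivAt_iter {f : ℝ → ℂ} (hf : ContDiff ℝ (⊤ : ℕ∞) f) (k : ℕ) (y : ℝ) :
    HasDerivAt (iteratedDeriv k f) (iteratedDeriv (k + 1) f y) y := by
  have := (diffIter hf k y).hasDerivAt
  rwa [iteratedDeriv_succ]

private lemma pascal_sum (a b : ℕ → ℂ) (n : ℕ) :
    ∑ k ∈ range (n + 1), (n.choose k : ℂ) *
        (a (k + 1) * b (n - k) + a k * b (n - k + 1))
      = ∑ k ∈ range (n + 2), ((n + 1).choose k : ℂ) * (a k * b (n + 1 - k)) := by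
  have hR : ∑ k ∈ range (n + 2), ((n + 1).choose k : ℂ) * (a k * b (n + 1 - k))
      = (∑ k ∈ range (n + 1), (n.choose k : ℂ) * (a (k + 1) * b (n - k)))
        + ((∑ k ∈ range (n + 1), (n.choose (k + 1) : ℂ) * (a (k + 1) * b (n - k)))
          + (1 : ℂ) * (a 0 * b (n + 1))) := by
    rw [Finset.sum_range_succ']
    simp only [Nat.succ_sub_succ, Nat.choose_succ_succ, Nat.choose_zero_right,
      Nat.cast_add, Nat.cast_one, add_mul]
    rw [Finset.sum_add_distrib]
    push_cast
    simp only [Nat.succ_eq_add_one]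
    ring
  rw [hR]
  simp only [mul_add]
  rw [Finset.sum_add_distrib]
  congr 1
  have hL : ∑ k ∈ range (n + 1), (n.choose k : ℂ) * (a k * b (n - k + 1))
      = (∑ k ∈ range n, (n.choose (k + 1) : ℂ) * (a (k + 1) * b (n - (k + 1) + 1)))
        + (n.choose 0 : ℂ) * (a 0 * b (n - 0 + 1)) := Finset.sum_range_succ'
      (fun k => (n.choose k : ℂ) * (a k * b (n - k + 1))) n
  rw [hL]
  have h1 : ∑ k ∈ range n, (n.choose (k + 1) : ℂ) * (a (k + 1) * b (n - (k + 1) + 1))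
      = ∑ k ∈ range n, (n.choose (k + 1) : ℂ) * (a (k + 1) * b (n - k)) := by
    refine Finset.sum_congr rfl fun k hk => ?_
    have hk' : n - (k + 1) + 1 = n - k := by
      have := Finset.mem_range.mp hk; omega
    rw [hk']
  have h2 : ∑ k ∈ range (n + 1), (n.choose (k + 1) : ℂ) * (a (k + 1) * b (n - k))
      = ∑ k ∈ range n, (n.choose (k + 1) : ℂ) * (a (k + 1) * b (n - k)) := by
    rw [Finset.sum_range_succ, Nat.choose_succ_self]
    simp
  rw [h1, h2]
  simp

private lemma leibniz {f g : ℝ → ℂ} (hf : ContDiff ℝ (⊤ : ℕ∞) f) (hg : ContDiff ℝ (⊤ : ℕ∞) g) (n : ℕ) :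
    iteratedDeriv n (fun x => f x * g x) = fun x =>
      ∑ k ∈ range (n + 1), (n.choose k : ℂ) *
        (iteratedDeriv k f x * iteratedDeriv (n - k) g x) := by
  induction n with
  | zero => funext x; simp
  | succ n ih =>
    funext x
    rw [iteratedDeriv_succ, ih]
    have hd : HasDerivAt (fun y => ∑ k ∈ range (n + 1), (n.choose k : ℂ) *
          (iteratedDeriv k f y * iteratedDeriv (n - k) g y))
        (∑ k ∈ range (n + 1), (n.choose k : ℂ) *
          (iteratedDeriv (k + 1) f x * iteratedDeriv (n - k) g x
            + iteratedDeriv k f x * iteratedDeriv (n - k + 1) g x)) x := by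
      refine HasDerivAt.fun_sum fun k _ => ?_
      have := ((hasDerivAt_iter hf k x).mul (hasDerivAt_iter hg (n - k) x)).const_mul
        ((n.choose k : ℂ))
      simpa [mul_add] using this
    rw [hd.deriv]
    exact pascal_sum (fun k => iteratedDeriv k f x) (fun k => iteratedDeriv k g x) n

theorem stmt_16 (f g : ℝ → ℂ) (hf : ContDiff ℝ (⊤ : ℕ∞) f) (hg : ContDiff ℝ (⊤ : ℕ∞) g)
    (hne : ∀ x : ℝ, f x ≠ 0) (hfd : ∀ x : ℝ, deriv f x = g x * f x)
    (hgdecay : ∀ n : ℕ, Filter.Tendsto (iteratedDeriv n g) (Filter.cocompact ℝ) (nhds 0)) :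
    ∀ n : ℕ, 1 ≤ n →
      Filter.Tendsto (fun x : ℝ => iteratedDeriv n f x / f x) (Filter.cocompact ℝ) (nhds 0) := by
  intro n
  induction n using Nat.strong_induction_on with
  | _ n IH =>
    intro hn
    obtain ⟨m, rfl⟩ : ∃ m, n = m + 1 := ⟨n - 1, by omega⟩
    have hkey : iteratedDeriv (m + 1) f = fun x =>
        ∑ k ∈ range (m + 1), (m.choose k : ℂ) *
          (iteratedDeriv k g x * iteratedDeriv (m - k) f x) := by
      rw [iteratedDeriv_succ']
      have : deriv f = fun x => g x * f x := funext hfd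
      rw [this]
      exact leibniz hg hf m
    have : (fun x : ℝ => iteratedDeriv (m + 1) f x / f x) = fun x =>
        ∑ k ∈ range (m + 1), (m.choose k : ℂ) *
          (iteratedDeriv k g x * (iteratedDeriv (m - k) f x / f x)) := by
      funext x
      rw [hkey]
      rw [Finset.sum_div]
      refine Finset.sum_congr rfl fun k _ => ?_
      field_simp
    rw [this]
    have h0 : (0 : ℂ) = ∑ k ∈ range (m + 1), (0 : ℂ) := by simp
    rw [h0]
    refine tendsto_finset_sum _ fun k hk => ?_
    by_cases hmk : m - k = 0
    · have hq : (fun x : ℝ => iteratedDeriv (m - k) f x / f x) = fun _ => (1 : ℂ) := by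
        funext x
        rw [hmk, iteratedDeriv_zero, div_self (hne x)]
      have : Tendsto (fun x : ℝ => (m.choose k : ℂ) *
          (iteratedDeriv k g x * (iteratedDeriv (m - k) f x / f x)))
          (cocompact ℝ) (nhds ((m.choose k : ℂ) * (0 * 1))) := by
        refine Tendsto.const_mul _ (Tendsto.mul (hgdecay k) ?_)
        rw [hq]
        exact tendsto_const_nhds
      simpa using this
    · have hlt : m - k < m + 1 := by omega
      have hge : 1 ≤ m - k := by omega
      have : Tendsto (fun x : ℝ => (m.choose k : ℂ) *
          (iteratedDeriv k g x * (iteratedDeriv (m - k) f x / f x)))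
          (cocompact ℝ) (nhds ((m.choose k : ℂ) * (0 * 0))) :=
        Tendsto.const_mul _ (Tendsto.mul (hgdecay k) (IH (m - k) hlt hge))
      simpa using this
end

section
/- Let ε > 0 and m > 0 be real numbers. Then there exists a constant C > 0 such that for all ξ ≥ 1: exp(-m·∫₀^ε (1 - cos(ξz))/z dz) ≤ C·ξ^{-m}. In other words, the function ξ ↦ exp(-m·∫₀^ε (1 - cos(ξz))/z dz) is O(ξ^{-m}) as ξ → +∞. -/
open intervalIntegral Real

lemma aux_cos (T : ℝ) (hT : 1 ≤ T) : |∫ u in (1:ℝ)..T, Real.cos u / u| ≤ 3 := by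
  have h0 : ∀ x ∈ Set.uIcc (1:ℝ) T, x ≠ 0 := by
    intro x hx
    rw [Set.uIcc_of_le hT] at hx
    exact ne_of_gt (lt_of_lt_of_le one_pos hx.1)
  have hu : ∀ x ∈ Set.uIcc (1:ℝ) T, HasDerivAt (fun y : ℝ => y⁻¹) (-(x ^ 2)⁻¹) x :=
    fun x hx => hasDerivAt_inv (h0 x hx)
  have hv : ∀ x ∈ Set.uIcc (1:ℝ) T, HasDerivAt Real.sin (Real.cos x) x :=
    fun x _ => Real.hasDerivAt_sin x
  have hcont : ContinuousOn (fun x : ℝ => -(x ^ 2)⁻¹) (Set.uIcc 1 T) :=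
    (((continuousOn_pow 2).inv₀ (fun x hx => pow_ne_zero 2 (h0 x hx)))).neg
  have hu' : IntervalIntegrable (fun x : ℝ => -(x ^ 2)⁻¹) MeasureTheory.volume 1 T :=
    hcont.intervalIntegrable
  have hv' : IntervalIntegrable Real.cos MeasureTheory.volume 1 T :=
    Real.continuous_cos.intervalIntegrable 1 T
  have ibp := intervalIntegral.integral_mul_deriv_eq_deriv_mul hu hv hu' hv'
  have heq : (∫ u in (1:ℝ)..T, Real.cos u / u) = ∫ x in (1:ℝ)..T, x⁻¹ * Real.cos x := by
    congr 1; ext x; rw [div_eq_inv_mul]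
  rw [heq, ibp]
  have hT0 : (0:ℝ) < T := lt_of_lt_of_le one_pos hT
  have hint : |∫ x in (1:ℝ)..T, -(x ^ 2)⁻¹ * Real.sin x| ≤ 1 := by
    have h1 : |∫ x in (1:ℝ)..T, -(x ^ 2)⁻¹ * Real.sin x| ≤
        ∫ x in (1:ℝ)..T, |(-(x ^ 2)⁻¹ * Real.sin x)| :=
      intervalIntegral.abs_integral_le_integral_abs hT
    have h2 : (∫ x in (1:ℝ)..T, |(-(x ^ 2)⁻¹ * Real.sin x)|) ≤ ∫ x in (1:ℝ)..T, (x:ℝ) ^ (-2 : ℤ) := by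
      apply intervalIntegral.integral_mono_on hT
      · exact (hcont.mul Real.continuous_sin.continuousOn).abs.intervalIntegrable
      · apply ContinuousOn.intervalIntegrable
        exact ContinuousOn.zpow₀ continuousOn_id _ (fun x hx => Or.inl (h0 x hx))
      · intro x hx
        have hx1 : (1:ℝ) ≤ x := hx.1
        have hx0 : (0:ℝ) < x := lt_of_lt_of_le one_pos hx1
        rw [abs_mul, abs_neg, abs_inv, abs_pow, abs_of_pos hx0, zpow_neg]
        calc (x ^ 2)⁻¹ * |Real.sin x| ≤ (x ^ 2)⁻¹ * 1 := by
              apply mul_le_mul_of_nonneg_left (Real.abs_sin_le_one x) (by positivity)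
          _ = (x ^ (2:ℤ))⁻¹ := by rw [mul_one]; norm_cast
    have h3 : (∫ x in (1:ℝ)..T, (x:ℝ) ^ (-2 : ℤ)) = 1 - T⁻¹ := by
      rw [integral_zpow (Or.inr ⟨by norm_num, fun h => h0 0 h rfl⟩)]
      norm_num
      ring
    have : (1:ℝ) - T⁻¹ ≤ 1 := by
      have : (0:ℝ) ≤ T⁻¹ := by positivity
      linarith
    linarith
  have h4 : |T⁻¹ * Real.sin T| ≤ 1 := by
    rw [abs_mul]
    have h5 : |T⁻¹| ≤ 1 := by
      rw [abs_of_pos (by positivity)]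
      exact inv_le_one_of_one_le₀ hT
    calc |T⁻¹| * |Real.sin T| ≤ 1 * 1 :=
      mul_le_mul h5 (Real.abs_sin_le_one T) (abs_nonneg _) zero_le_one
    _ = 1 := by ring
  have h6 : |(1:ℝ)⁻¹ * Real.sin 1| ≤ 1 := by
    rw [inv_one, one_mul]; exact Real.abs_sin_le_one 1
  calc |T⁻¹ * Real.sin T - 1⁻¹ * Real.sin 1 - ∫ x in (1:ℝ)..T, -(x ^ 2)⁻¹ * Real.sin x|
      ≤ |T⁻¹ * Real.sin T - 1⁻¹ * Real.sin 1| + |∫ x in (1:ℝ)..T, -(x ^ 2)⁻¹ * Real.sin x| :=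
        abs_sub _ _
    _ ≤ (|T⁻¹ * Real.sin T| + |(1:ℝ)⁻¹ * Real.sin 1|) + 1 := by
        have := abs_sub (T⁻¹ * Real.sin T) ((1:ℝ)⁻¹ * Real.sin 1)
        linarith
    _ ≤ 3 := by linarith

lemma aux_integrable (ξ ε : ℝ) (hε : 0 < ε) (hξ : 1 ≤ ξ) :
    IntervalIntegrable (fun z : ℝ => (1 - Real.cos (ξ * z)) / z) MeasureTheory.volume 0 ε := by
  rw [intervalIntegrable_iff_integrableOn_Ioc_of_le hε.le]
  apply MeasureTheory.Integrable.mono' (g := fun _ : ℝ => ξ ^ 2 * ε / 2)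
    (MeasureTheory.integrable_const _)
  · apply ContinuousOn.aestronglyMeasurable _ measurableSet_Ioc
    apply ContinuousOn.div
    · exact (continuous_const.sub (Real.continuous_cos.comp (continuous_const.mul continuous_id))).continuousOn
    · exact continuousOn_id
    · intro z hz; exact ne_of_gt hz.1
  · rw [MeasureTheory.ae_restrict_iff' measurableSet_Ioc]
    filter_upwards with z hz
    have hz0 : 0 < z := hz.1
    have hzε : z ≤ ε := hz.2
    have hcos : 1 - Real.cos (ξ * z) ≤ (ξ * z) ^ 2 / 2 := by
      have := Real.one_sub_sq_div_two_le_cos (x := ξ * z)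
      linarith
    have hnn : 0 ≤ 1 - Real.cos (ξ * z) := by
      have := Real.cos_le_one (ξ * z); linarith
    rw [Real.norm_eq_abs, abs_of_nonneg (div_nonneg hnn hz0.le)]
    rw [div_le_iff₀ hz0] at *
    calc 1 - Real.cos (ξ * z) ≤ (ξ * z) ^ 2 / 2 := hcos
      _ = (ξ ^ 2 * z / 2) * z := by ring
      _ ≤ (ξ ^ 2 * ε / 2) * z := by
          apply mul_le_mul_of_nonneg_right _ hz0.le
          have h1 : (0:ℝ) ≤ ξ ^ 2 := sq_nonneg ξ
          nlinarith

lemma aux_nonneg (ξ b : ℝ) (hb : 0 ≤ b) :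
    0 ≤ ∫ z in (0:ℝ)..b, (1 - Real.cos (ξ * z)) / z := by
  apply intervalIntegral.integral_nonneg hb
  intro z hz
  apply div_nonneg _ hz.1
  have := Real.cos_le_one (ξ * z); linarith

lemma aux_lower (ε ξ : ℝ) (hε : 0 < ε) (hξ : 1 ≤ ξ) (h1 : 1 ≤ ξ * ε) :
    Real.log ξ + Real.log ε - 3 ≤ ∫ z in (0:ℝ)..ε, (1 - Real.cos (ξ * z)) / z := by
  have h0ξ : 0 < ξ := lt_of_lt_of_le one_pos hξ
  have hinv : ξ⁻¹ ≤ ε := by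
    rw [inv_le_iff_one_le_mul₀ h0ξ]; linarith [h1]
  have hinv0 : 0 < ξ⁻¹ := by positivity
  have hpos : ∀ z ∈ Set.uIcc ξ⁻¹ ε, z ≠ 0 := by
    intro z hz
    rw [Set.uIcc_of_le hinv] at hz
    exact ne_of_gt (lt_of_lt_of_le hinv0 hz.1)
  have hIa : IntervalIntegrable (fun z : ℝ => (1 - Real.cos (ξ * z)) / z)
      MeasureTheory.volume 0 ξ⁻¹ := by
    apply (aux_integrable ξ ε hε hξ).mono_set
    rw [Set.uIcc_of_le hinv0.le, Set.uIcc_of_le hε.le]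
    exact Set.Icc_subset_Icc le_rfl hinv
  have hcont1 : ContinuousOn (fun z : ℝ => (1:ℝ) / z) (Set.uIcc ξ⁻¹ ε) :=
    continuousOn_const.div continuousOn_id hpos
  have hcont2 : ContinuousOn (fun z : ℝ => Real.cos (ξ * z) / z) (Set.uIcc ξ⁻¹ ε) :=
    ((Real.continuous_cos.comp (continuous_const.mul continuous_id)).continuousOn).div
      continuousOn_id hpos
  have hIb : IntervalIntegrable (fun z : ℝ => (1 - Real.cos (ξ * z)) / z)
      MeasureTheory.volume ξ⁻¹ ε := by
    apply ContinuousOn.intervalIntegrable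
    exact (continuous_const.sub (Real.continuous_cos.comp
      (continuous_const.mul continuous_id))).continuousOn.div continuousOn_id hpos
  have hsplit := intervalIntegral.integral_add_adjacent_intervals hIa hIb
  have hfirst := aux_nonneg ξ ξ⁻¹ hinv0.le
  -- second integral equals ∫ 1/z - ∫ cos(ξ z)/z
  have hsub : (∫ z in ξ⁻¹..ε, (1 - Real.cos (ξ * z)) / z)
      = (∫ z in ξ⁻¹..ε, (1:ℝ) / z) - ∫ z in ξ⁻¹..ε, Real.cos (ξ * z) / z := by
    rw [← intervalIntegral.integral_sub hcont1.intervalIntegrable hcont2.intervalIntegrable]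
    congr 1; ext z; rw [sub_div]
  have hlog : (∫ z in ξ⁻¹..ε, (1:ℝ) / z) = Real.log ξ + Real.log ε := by
    rw [integral_one_div (fun h => hpos 0 h rfl)]
    rw [Real.log_div (ne_of_gt hε) (ne_of_gt hinv0), Real.log_inv]
    ring
  have hcos : (∫ z in ξ⁻¹..ε, Real.cos (ξ * z) / z)
      = ∫ u in (1:ℝ)..(ξ * ε), Real.cos u / u := by
    have hcongr : (∫ z in ξ⁻¹..ε, Real.cos (ξ * z) / z)
        = ∫ z in ξ⁻¹..ε, ξ * (Real.cos (ξ * z) / (ξ * z)) := by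
      apply intervalIntegral.integral_congr
      intro z hz
      have hz0 : z ≠ 0 := hpos z hz
      field_simp
    rw [hcongr, intervalIntegral.integral_const_mul, ← smul_eq_mul,
      intervalIntegral.smul_integral_comp_mul_left (fun u => Real.cos u / u) ξ,
      mul_inv_cancel₀ (ne_of_gt h0ξ)]
  have hbnd := aux_cos (ξ * ε) h1
  have : |∫ z in ξ⁻¹..ε, Real.cos (ξ * z) / z| ≤ 3 := by rw [hcos]; exact hbnd
  have h2 := abs_le.mp this
  linarith [hsplit, hfirst, hsub, hlog, h2.1, h2.2]

theorem stmt_17 (ε m : ℝ) (hε : 0 < ε) (hm : 0 < m) :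
    ∃ C : ℝ, 0 < C ∧ ∀ ξ : ℝ, 1 ≤ ξ →
      Real.exp (-m * ∫ z in (0:ℝ)..ε, (1 - Real.cos (ξ * z)) / z) ≤ C * ξ ^ (-m) := by
  refine ⟨Real.exp (m * (3 - Real.log ε)), Real.exp_pos _, ?_⟩
  intro ξ hξ
  have h0ξ : 0 < ξ := lt_of_lt_of_le one_pos hξ
  have hrpow : ξ ^ (-m) = Real.exp (-m * Real.log ξ) := by
    rw [Real.rpow_def_of_pos h0ξ]; ring_nf
  rw [hrpow, ← Real.exp_add]
  by_cases h1 : 1 ≤ ξ * ε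
  · have := aux_lower ε ξ hε hξ h1
    apply Real.exp_le_exp.mpr
    nlinarith [this, hm]
  · have hI := aux_nonneg ξ ε hε.le
    have hlog : Real.log (ξ * ε) ≤ 0 :=
      Real.log_nonpos (by positivity) (le_of_not_ge h1)
    rw [Real.log_mul (ne_of_gt h0ξ) (ne_of_gt hε)] at hlog
    calc Real.exp (-m * ∫ z in (0:ℝ)..ε, (1 - Real.cos (ξ * z)) / z) ≤ Real.exp 0 := by
          apply Real.exp_le_exp.mpr
          nlinarith [hI, hm]
      _ ≤ _ := by
          apply Real.exp_le_exp.mpr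
          nlinarith [hm, hlog]
end
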